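/- arXiv:2408.03713 — 11 statements merged into one kernel-verified Lean document; each statement's English description precedes it below -/
import Mathlib

section
/- Matching lemma: Let n ≥ 1, let λ₁,…,λₙ be real numbers with Σ_{i=1}^n λ_i = 0, and let x₁,…,xₙ ∈ ℝ^d. Then there exist a finite index set, nonnegative coefficients c_l, and for each l indices j_l, k_l ∈ {1,…,n} with λ_{j_l} ≥ 0 and λ_{k_l} < 0, such that Σ_{i=1}^n λ_i x_i = Σ_l c_l (x_{j_l} − x_{k_l}) and Σ_l c_l = Σ_{i : λ_i ≥ 0} λ_i. -/
/-!
Let `S = ∑_{λ_i ≥ 0} λ_i`; since the `λ_i` sum to zero, also `S = ∑_{λ_i < 0} (-λ_i)`. Spread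
the mass of each nonnegative index `a` over the negative indices `b` in proportion to their
mass, i.e. give the pair `(a, b)` the weight `λ_a (-λ_b) / S`. Summing
`λ_a (-λ_b) (x_a - x_b)` over `b` gives `S λ_a x_a + λ_a ∑_{λ_b < 0} λ_b x_b`, and then over
`a` gives `S ∑ λ_i x_i`. When `S = 0` all `λ_i` vanish, since `∑ |λ_i| = 2 S`.
-/

open Finset

theorem sum_filter_nonneg_add_sum_filter_neg {ι M : Type*} [Fintype ι] [AddCommMonoid M]
    (lam : ι → ℝ) (f : ι → M) :
    ∑ i with 0 ≤ lam i, f i + ∑ i with lam i < 0, f i = ∑ i, f i := by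
  simpa only [not_le] using sum_filter_add_sum_filter_not univ (fun i => 0 ≤ lam i) f

section
variable {ι M : Type*} [Fintype ι] [AddCommGroup M] [Module ℝ M]

noncomputable def matchingPairs (lam : ι → ℝ) : Finset (ι × ι) :=
  ({i | 0 ≤ lam i} : Finset ι) ×ˢ ({i | lam i < 0} : Finset ι)

theorem mem_matchingPairs {lam : ι → ℝ} {p : ι × ι} :
    p ∈ matchingPairs lam ↔ 0 ≤ lam p.1 ∧ lam p.2 < 0 := by
  simp [matchingPairs]

variable {lam : ι → ℝ}

theorem sum_filter_neg_neg_eq_sum_filter_nonneg (h : ∑ i, lam i = 0) :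
    ∑ i with lam i < 0, -lam i = ∑ i with 0 ≤ lam i, lam i := by
  rw [sum_neg_distrib]
  linarith [sum_filter_nonneg_add_sum_filter_neg lam lam]

theorem sum_abs_eq_two_mul_sum_filter_nonneg (h : ∑ i, lam i = 0) :
    ∑ i, |lam i| = 2 * ∑ i with 0 ≤ lam i, lam i := by
  have hpos : ∑ i with 0 ≤ lam i, |lam i| = ∑ i with 0 ≤ lam i, lam i :=
    sum_congr rfl fun i hi => abs_of_nonneg (mem_filter.1 hi).2
  have hneg : ∑ i with lam i < 0, |lam i| = ∑ i with lam i < 0, -lam i :=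
    sum_congr rfl fun i hi => abs_of_neg (mem_filter.1 hi).2
  rw [← sum_filter_nonneg_add_sum_filter_neg lam, hpos, hneg,
    sum_filter_neg_neg_eq_sum_filter_nonneg h]
  ring

theorem eq_zero_of_sum_filter_nonneg_eq_zero (h : ∑ i, lam i = 0)
    (hS : ∑ i with 0 ≤ lam i, lam i = 0) : lam = 0 := by
  have habs : ∑ i, |lam i| = 0 := by rw [sum_abs_eq_two_mul_sum_filter_nonneg h, hS, mul_zero]
  funext i
  exact abs_eq_zero.1 ((sum_eq_zero_iff_of_nonneg fun i _ => abs_nonneg (lam i)).1 habs i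
    (mem_univ i))

theorem smul_sum_smul_eq_sum_sum_smul_sub (h : ∑ i, lam i = 0) (x : ι → M) :
    (∑ i with 0 ≤ lam i, lam i) • ∑ i, lam i • x i =
      ∑ a with 0 ≤ lam a, ∑ b with lam b < 0, (lam a * -lam b) • (x a - x b) := by
  have hrow : ∀ a, ∑ b with lam b < 0, (lam a * -lam b) • (x a - x b) =
      (∑ i with 0 ≤ lam i, lam i) • lam a • x a + lam a • ∑ b with lam b < 0, lam b • x b := by
    intro a
    have hterm : ∀ b, (lam a * -lam b) • (x a - x b) =
        (-lam b) • lam a • x a + lam a • lam b • x b := fun b => by module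
    rw [sum_congr rfl fun b _ => hterm b, sum_add_distrib, ← sum_smul,
      sum_filter_neg_neg_eq_sum_filter_nonneg h, ← smul_sum]
  rw [sum_congr rfl fun a _ => hrow a, sum_add_distrib, ← smul_sum, ← sum_smul,
    ← smul_add, sum_filter_nonneg_add_sum_filter_neg]

theorem exists_sum_smul_eq_sum_smul_sub (h : ∑ i, lam i = 0) (x : ι → M) :
    ∃ c : ι × ι → ℝ, (∀ p ∈ matchingPairs lam, 0 ≤ c p) ∧
      ∑ i, lam i • x i = ∑ p ∈ matchingPairs lam, c p • (x p.1 - x p.2) ∧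
      ∑ p ∈ matchingPairs lam, c p = ∑ i with 0 ≤ lam i, lam i := by
  set S := ∑ i with 0 ≤ lam i, lam i
  have hS0 : 0 ≤ S := sum_nonneg fun i hi => (mem_filter.1 hi).2
  refine ⟨fun p => lam p.1 * -lam p.2 / S, fun p hp => ?_, ?_, ?_⟩
  · have hp := mem_matchingPairs.1 hp
    exact div_nonneg (mul_nonneg hp.1 (neg_nonneg.2 hp.2.le)) hS0
  · by_cases hS : S = 0
    · simp [eq_zero_of_sum_filter_nonneg_eq_zero h hS]
    · calc ∑ i, lam i • x i = S⁻¹ • S • ∑ i, lam i • x i := (inv_smul_smul₀ hS _).symm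
        _ = ∑ p ∈ matchingPairs lam, (lam p.1 * -lam p.2 / S) • (x p.1 - x p.2) := by
          rw [smul_sum_smul_eq_sum_sum_smul_sub h, matchingPairs, sum_product, smul_sum]
          simp only [smul_sum, smul_smul, div_eq_inv_mul]
  · calc ∑ p ∈ matchingPairs lam, lam p.1 * -lam p.2 / S
        = (∑ a with 0 ≤ lam a, lam a) * (∑ b with lam b < 0, -lam b) / S := by
          simp only [matchingPairs, sum_product, sum_mul_sum, sum_div]
      _ = S := by rw [sum_filter_neg_neg_eq_sum_filter_nonneg h]; exact mul_self_div_self S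

end

theorem matching_lemma_general (n d : ℕ)
    (lam : Fin n → ℝ) (hsum : ∑ i, lam i = 0)
    (x : Fin n → EuclideanSpace ℝ (Fin d)) :
    ∃ (m : ℕ) (c : Fin m → ℝ) (j k : Fin m → Fin n),
      (∀ l, 0 ≤ c l) ∧
      (∀ l, 0 ≤ lam (j l)) ∧
      (∀ l, lam (k l) < 0) ∧
      (∑ i, lam i • x i) = (∑ l, c l • (x (j l) - x (k l))) ∧
      (∑ l, c l) = ∑ i ∈ Finset.univ.filter (fun i => 0 ≤ lam i), lam i := by
  obtain ⟨c, hc, hx, hcS⟩ := exists_sum_smul_eq_sum_smul_sub hsum x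
  let e := (matchingPairs lam).equivFin.symm
  have hmem (l) := mem_matchingPairs.1 (e l).2
  refine ⟨_, fun l => c (e l), fun l => (e l).1.1, fun l => (e l).1.2,
    fun l => hc _ (e l).2, fun l => (hmem l).1, fun l => (hmem l).2, ?_, ?_⟩
  · rw [hx, ← sum_coe_sort, ← e.sum_comp]
  · rw [← hcS, ← sum_coe_sort (matchingPairs lam), ← e.sum_comp]

/-- **Matching lemma.** Given real numbers `λ₁,…,λₙ` summing to zero and vectors
`x₁,…,xₙ ∈ ℝ^d`, the terms with nonnegative coefficients can be matched with the
terms with negative coefficients: there are finitely many nonnegative coefficients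
`c l` and indices `j l, k l` with `λ (j l) ≥ 0`, `λ (k l) < 0` such that
`∑ i, λ i • x i = ∑ l, c l • (x (j l) - x (k l))` and `∑ l, c l = ∑_{i : λ i ≥ 0} λ i`. -/
theorem matching_lemma (n d : ℕ) (hn : 1 ≤ n) (hd : 1 ≤ d)
    (lam : Fin n → ℝ) (hsum : ∑ i, lam i = 0)
    (x : Fin n → EuclideanSpace ℝ (Fin d)) :
    ∃ (m : ℕ) (c : Fin m → ℝ) (j k : Fin m → Fin n),
      (∀ l, 0 ≤ c l) ∧
      (∀ l, 0 ≤ lam (j l)) ∧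
      (∀ l, lam (k l) < 0) ∧
      (∑ i, lam i • x i) = (∑ l, c l • (x (j l) - x (k l))) ∧
      (∑ l, c l) = ∑ i ∈ Finset.univ.filter (fun i => 0 ≤ lam i), lam i :=
  matching_lemma_general n d lam hsum x
end

section
/- Path preserving: In the path model (group interaction on the path graph), if the profile at time t equals G, i.e. ‖x_i(t) − x_{i+1}(t)‖ ≤ ε for every i ≥ 1, then the profile at time t+1 also equals G, i.e. ‖x_i(t+1) − x_{i+1}(t+1)‖ ≤ ε for every i ≥ 1. -/
/-!
When the profile equals `G`, every vertex `i ≥ 2` averages over `{i - 1, i, i + 1}` and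
vertex `1` over `{1, 2}`. The new difference `x_i(t+1) - x_{i+1}(t+1)` is then a combination
of the old consecutive differences with nonnegative coefficients summing to at most `1`,
so its norm stays at most `ε`.
-/

/-- The update neighborhood of vertex `i ≥ 1` at time `t` in the mixed HK model under
group interaction on the path graph on `ℤ⁺` with edges `(i, i+1)`:
`N_i(t) = {j ∈ ℤ⁺ : j = i, or |i − j| = 1 and ‖x_i(t) − x_j(t)‖ ≤ ε}`. -/
noncomputable def pathNbhd {d : ℕ} (ε : ℝ) (x : ℕ → ℕ → EuclideanSpace ℝ (Fin d))
    (t i : ℕ) : Finset ℕ :=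
  (Finset.range (i + 2)).filter fun j =>
    1 ≤ j ∧ (j = i ∨ ((j = i + 1 ∨ j + 1 = i) ∧ ‖x t i - x t j‖ ≤ ε))

open Set

section Averages

variable {E : Type*} [SeminormedAddCommGroup E] [NormedSpace ℝ E] {ε a b : ℝ}

lemma norm_smul_le_mul_of_nonneg {c : ℝ} (hc : 0 ≤ c) {v : E} (hv : ‖v‖ ≤ ε) :
    ‖c • v‖ ≤ c * ε := by
  rw [norm_smul_of_nonneg hc]
  gcongr

lemma norm_sub_of_interior_averages_le {x₁ x₂ x₃ x₄ : E} (ha : a ∈ Icc (0 : ℝ) 1)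
    (hb : b ∈ Icc (0 : ℝ) 1) (h₁₂ : ‖x₁ - x₂‖ ≤ ε) (h₂₃ : ‖x₂ - x₃‖ ≤ ε)
    (h₃₄ : ‖x₃ - x₄‖ ≤ ε) :
    ‖(a • x₂ + ((1 - a) / 3) • (x₁ + x₂ + x₃)) -
      (b • x₃ + ((1 - b) / 3) • (x₂ + x₃ + x₄))‖ ≤ ε := by
  obtain ⟨ha₀, ha₁⟩ := ha
  obtain ⟨hb₀, hb₁⟩ := hb
  calc _ = ‖((1 - a) / 3) • (x₁ - x₂) + ((1 + a + b) / 3) • (x₂ - x₃)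
          + ((1 - b) / 3) • (x₃ - x₄)‖ := by congr 1; module
    _ ≤ ‖((1 - a) / 3) • (x₁ - x₂)‖ + ‖((1 + a + b) / 3) • (x₂ - x₃)‖
          + ‖((1 - b) / 3) • (x₃ - x₄)‖ := norm_add₃_le
    _ ≤ (1 - a) / 3 * ε + (1 + a + b) / 3 * ε + (1 - b) / 3 * ε := by
      gcongr <;> apply norm_smul_le_mul_of_nonneg (by linarith) ‹_›
    _ = ε := by ring

lemma norm_sub_of_endpoint_averages_le {x₁ x₂ x₃ : E} (ha : a ∈ Icc (0 : ℝ) 1)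
    (hb : b ∈ Icc (0 : ℝ) 1) (h₁₂ : ‖x₁ - x₂‖ ≤ ε) (h₂₃ : ‖x₂ - x₃‖ ≤ ε) :
    ‖(a • x₁ + ((1 - a) / 2) • (x₁ + x₂)) -
      (b • x₂ + ((1 - b) / 3) • (x₁ + x₂ + x₃))‖ ≤ ε := by
  obtain ⟨ha₀, ha₁⟩ := ha
  obtain ⟨hb₀, hb₁⟩ := hb
  have hε : 0 ≤ ε := (norm_nonneg _).trans h₁₂
  calc _ = ‖((1 + 3 * a + 2 * b) / 6) • (x₁ - x₂) + ((1 - b) / 3) • (x₂ - x₃)‖ := by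
          congr 1; module
    _ ≤ ‖((1 + 3 * a + 2 * b) / 6) • (x₁ - x₂)‖ + ‖((1 - b) / 3) • (x₂ - x₃)‖ :=
      norm_add_le _ _
    _ ≤ (1 + 3 * a + 2 * b) / 6 * ε + (1 - b) / 3 * ε := by
      gcongr <;> apply norm_smul_le_mul_of_nonneg (by linarith) ‹_›
    _ ≤ ε := by nlinarith

end Averages

section PathModel

variable {d : ℕ} {ε : ℝ} {x : ℕ → ℕ → EuclideanSpace ℝ (Fin d)} {α : ℕ → ℕ → ℝ} {t : ℕ}

lemma pathNbhd_one (h : ‖x t 1 - x t 2‖ ≤ ε) : pathNbhd ε x t 1 = {1, 2} := by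
  ext j
  simp only [pathNbhd, Finset.mem_filter, Finset.mem_range, Finset.mem_insert,
    Finset.mem_singleton]
  constructor
  · rintro ⟨_, _, _ | ⟨_ | _, _⟩⟩ <;> omega
  · rintro (rfl | rfl)
    · exact ⟨by omega, le_rfl, Or.inl rfl⟩
    · exact ⟨by omega, by omega, Or.inr ⟨Or.inl rfl, h⟩⟩

lemma pathNbhd_succ {j : ℕ} (hj : 1 ≤ j) (hl : ‖x t (j + 1) - x t j‖ ≤ ε)
    (hr : ‖x t (j + 1) - x t (j + 2)‖ ≤ ε) : pathNbhd ε x t (j + 1) = {j, j + 1, j + 2} := by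
  ext k
  simp only [pathNbhd, Finset.mem_filter, Finset.mem_range, Finset.mem_insert,
    Finset.mem_singleton]
  constructor
  · rintro ⟨_, _, _ | ⟨_ | _, _⟩⟩ <;> omega
  · rintro (rfl | rfl | rfl)
    · exact ⟨by omega, hj, Or.inr ⟨Or.inr rfl, hl⟩⟩
    · exact ⟨by omega, by omega, Or.inl rfl⟩
    · exact ⟨by omega, by omega, Or.inr ⟨Or.inl rfl, hr⟩⟩

variable (hdyn : ∀ t i, 1 ≤ i → x (t + 1) i =
      α t i • x t i + ((1 - α t i) / ((pathNbhd ε x t i).card : ℝ)) •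
        ∑ k ∈ pathNbhd ε x t i, x t k)
include hdyn

lemma update_one (h : ‖x t 1 - x t 2‖ ≤ ε) :
    x (t + 1) 1 = α t 1 • x t 1 + ((1 - α t 1) / 2) • (x t 1 + x t 2) := by
  rw [hdyn t 1 le_rfl, pathNbhd_one h, Finset.sum_pair (by norm_num),
    Finset.card_pair (by norm_num)]
  norm_num

lemma update_succ {j : ℕ} (hj : 1 ≤ j) (hl : ‖x t (j + 1) - x t j‖ ≤ ε)
    (hr : ‖x t (j + 1) - x t (j + 2)‖ ≤ ε) :
    x (t + 1) (j + 1) = α t (j + 1) • x t (j + 1) +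
      ((1 - α t (j + 1)) / 3) • (x t j + x t (j + 1) + x t (j + 2)) := by
  rw [hdyn t (j + 1) (by omega), pathNbhd_succ hj hl hr,
    Finset.sum_insert (by simp), Finset.sum_pair (by omega), ← add_assoc,
    Finset.card_insert_of_notMem (by simp), Finset.card_pair (by omega)]
  norm_num

end PathModel

theorem path_preserving_general (d : ℕ) (ε : ℝ)
    (x : ℕ → ℕ → EuclideanSpace ℝ (Fin d)) (α : ℕ → ℕ → ℝ)
    (hα : ∀ t i, α t i ∈ Set.Icc (0 : ℝ) 1)
    (hdyn : ∀ t i, 1 ≤ i → x (t + 1) i =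
      α t i • x t i + ((1 - α t i) / ((pathNbhd ε x t i).card : ℝ)) •
        ∑ k ∈ pathNbhd ε x t i, x t k)
    (t : ℕ) (hprof : ∀ i, 1 ≤ i → ‖x t i - x t (i + 1)‖ ≤ ε) :
    ∀ i, 1 ≤ i → ‖x (t + 1) i - x (t + 1) (i + 1)‖ ≤ ε := by
  have hprof_rev : ∀ i, 1 ≤ i → ‖x t (i + 1) - x t i‖ ≤ ε := fun i hi => by
    rw [norm_sub_rev]; exact hprof i hi
  have hupdate : ∀ j, 1 ≤ j → x (t + 1) (j + 1) = α t (j + 1) • x t (j + 1) +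
      ((1 - α t (j + 1)) / 3) • (x t j + x t (j + 1) + x t (j + 2)) := fun j hj =>
    update_succ hdyn hj (hprof_rev j hj) (hprof (j + 1) (by omega))
  intro i hi
  obtain rfl | ⟨j, hj, rfl⟩ : i = 1 ∨ ∃ j, 1 ≤ j ∧ i = j + 1 :=
    (eq_or_lt_of_le hi).imp Eq.symm fun h => ⟨i - 1, by omega, by omega⟩
  · rw [update_one hdyn (hprof 1 le_rfl), hupdate 1 le_rfl]
    exact norm_sub_of_endpoint_averages_le (hα t 1) (hα t 2) (hprof 1 le_rfl)
      (hprof 2 (by norm_num))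
  · rw [hupdate j hj, hupdate (j + 1) (by omega)]
    exact norm_sub_of_interior_averages_le (hα t _) (hα t _) (hprof j hj)
      (hprof (j + 1) (by omega)) (hprof (j + 2) (by omega))

/-- **Path preserving.** In the path model under group interaction, if the profile
at time `t` equals `G`, i.e. `‖x_i(t) − x_{i+1}(t)‖ ≤ ε` for every `i ≥ 1`, then the
profile at time `t+1` also equals `G`. -/
theorem path_preserving (d : ℕ) (hd : 1 ≤ d) (ε : ℝ) (hε : 0 < ε)
    (x : ℕ → ℕ → EuclideanSpace ℝ (Fin d)) (α : ℕ → ℕ → ℝ)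
    (hα : ∀ t i, α t i ∈ Set.Icc (0 : ℝ) 1)
    (hdyn : ∀ t i, 1 ≤ i → x (t + 1) i =
      α t i • x t i + ((1 - α t i) / ((pathNbhd ε x t i).card : ℝ)) •
        ∑ k ∈ pathNbhd ε x t i, x t k)
    (t : ℕ) (hprof : ∀ i, 1 ≤ i → ‖x t i - x t (i + 1)‖ ≤ ε) :
    ∀ i, 1 ≤ i → ‖x (t + 1) i - x (t + 1) (i + 1)‖ ≤ ε :=
  path_preserving_general d ε x α hα hdyn t hprof
end

section
/- First edge bound in the path model: Suppose the profile at time t equals G, i.e. ‖x_i(t) − x_{i+1}(t)‖ ≤ ε for every i ≥ 1, and let A_t = sup_{i ≥ 1} ‖x_i(t) − x_{i+1}(t)‖. Then ‖x_1(t+1) − x_2(t+1)‖ ≤ ((1 + α_1(t))/2) · A_t. -/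
open Finset

section PathNbhd

variable {d : ℕ} {ε : ℝ} {x : ℕ → ℕ → EuclideanSpace ℝ (Fin d)} {t : ℕ}

theorem pathNbhd_one_of_le (h12 : ‖x t 1 - x t 2‖ ≤ ε) : pathNbhd ε x t 1 = {1, 2} := by
  ext j
  simp only [pathNbhd, mem_filter, mem_range, mem_insert, mem_singleton]
  constructor
  · rintro ⟨hj, hj1, h⟩
    omega
  · rintro (rfl | rfl)
    · exact ⟨by norm_num, le_rfl, Or.inl rfl⟩
    · exact ⟨by norm_num, by norm_num, Or.inr ⟨Or.inl rfl, h12⟩⟩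

theorem pathNbhd_succ_of_le {i : ℕ} (hi : 1 ≤ i) (hleft : ‖x t i - x t (i + 1)‖ ≤ ε)
    (hright : ‖x t (i + 1) - x t (i + 2)‖ ≤ ε) :
    pathNbhd ε x t (i + 1) = {i, i + 1, i + 2} := by
  ext j
  simp only [pathNbhd, mem_filter, mem_range, mem_insert, mem_singleton]
  constructor
  · rintro ⟨hj, hj1, h⟩
    omega
  · rintro (rfl | rfl | rfl)
    · exact ⟨by omega, hi, Or.inr ⟨Or.inr rfl, by rwa [norm_sub_rev]⟩⟩
    · exact ⟨by omega, by omega, Or.inl rfl⟩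
    · exact ⟨by omega, by omega, Or.inr ⟨Or.inl rfl, hright⟩⟩

end PathNbhd

theorem norm_smul_add_smul_le {E : Type*} [SeminormedAddCommGroup E] [NormedSpace ℝ E]
    {p q : E} {c₁ c₂ A : ℝ} (hc₁ : 0 ≤ c₁) (hc₂ : 0 ≤ c₂) (hp : ‖p‖ ≤ A) (hq : ‖q‖ ≤ A) :
    ‖c₁ • p + c₂ • q‖ ≤ (c₁ + c₂) * A :=
  calc ‖c₁ • p + c₂ • q‖
      ≤ c₁ * ‖p‖ + c₂ * ‖q‖ := by
        simpa [norm_smul, abs_of_nonneg hc₁, abs_of_nonneg hc₂] using norm_add_le (c₁ • p) (c₂ • q)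
    _ ≤ (c₁ + c₂) * A := by nlinarith

theorem norm_groupUpdate_sub_le {E : Type*} [SeminormedAddCommGroup E] [NormedSpace ℝ E]
    {u v w : E} {a b A : ℝ} (ha : 0 ≤ a) (hb : b ∈ Set.Icc (0 : ℝ) 1)
    (huv : ‖u - v‖ ≤ A) (hvw : ‖v - w‖ ≤ A) :
    ‖(a • u + ((1 - a) / 2) • (u + v)) - (b • v + ((1 - b) / 3) • (u + v + w))‖ ≤
      (1 + a) / 2 * A := by
  obtain ⟨hb0, hb1⟩ := hb
  have hsplit : (a • u + ((1 - a) / 2) • (u + v)) - (b • v + ((1 - b) / 3) • (u + v + w)) =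
      ((1 + a) / 2 - (1 - b) / 3) • (u - v) + ((1 - b) / 3) • (v - w) := by
    module
  have hbound := norm_smul_add_smul_le (c₁ := (1 + a) / 2 - (1 - b) / 3) (c₂ := (1 - b) / 3)
    (by linarith) (by linarith) huv hvw
  rw [sub_add_cancel] at hbound
  rwa [hsplit]

theorem first_edge_bound_general (d : ℕ) (ε : ℝ)
    (x : ℕ → ℕ → EuclideanSpace ℝ (Fin d)) (α : ℕ → ℕ → ℝ)
    (hα : ∀ t i, α t i ∈ Set.Icc (0 : ℝ) 1)
    (hdyn : ∀ t i, 1 ≤ i → x (t + 1) i =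
      α t i • x t i + ((1 - α t i) / ((pathNbhd ε x t i).card : ℝ)) •
        ∑ k ∈ pathNbhd ε x t i, x t k)
    (t : ℕ) (hprof : ∀ i, 1 ≤ i → ‖x t i - x t (i + 1)‖ ≤ ε) :
    ‖x (t + 1) 1 - x (t + 1) 2‖ ≤
      ((1 + α t 1) / 2) * ⨆ i : ℕ, ‖x t (i + 1) - x t (i + 2)‖ := by
  have h12 := hprof 1 le_rfl
  have h23 := hprof 2 (by norm_num)
  have hx1 : x (t + 1) 1 = α t 1 • x t 1 + ((1 - α t 1) / 2) • (x t 1 + x t 2) := by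
    rw [hdyn t 1 le_rfl, pathNbhd_one_of_le h12]
    norm_num [sum_insert, card_insert_of_notMem]
  have hx2 : x (t + 1) 2 =
      α t 2 • x t 2 + ((1 - α t 2) / 3) • (x t 1 + x t 2 + x t 3) := by
    rw [hdyn t 2 (by norm_num), pathNbhd_succ_of_le le_rfl h12 h23]
    norm_num [sum_insert, card_insert_of_notMem, add_assoc]
  have hbdd : BddAbove (Set.range fun i : ℕ => ‖x t (i + 1) - x t (i + 2)‖) := by
    refine ⟨ε, ?_⟩
    rintro _ ⟨i, rfl⟩
    exact hprof (i + 1) (by omega)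
  rw [hx1, hx2]
  exact norm_groupUpdate_sub_le (hα t 1).1 (hα t 2) (le_ciSup hbdd 0) (le_ciSup hbdd 1)

/-- **First edge bound in the path model.** If the profile at time `t` equals `G`,
then with `A_t = sup_{i ≥ 1} ‖x_i(t) − x_{i+1}(t)‖` one has
`‖x_1(t+1) − x_2(t+1)‖ ≤ ((1 + α_1(t))/2) · A_t`. -/
theorem first_edge_bound (d : ℕ) (hd : 1 ≤ d) (ε : ℝ) (hε : 0 < ε)
    (x : ℕ → ℕ → EuclideanSpace ℝ (Fin d)) (α : ℕ → ℕ → ℝ)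
    (hα : ∀ t i, α t i ∈ Set.Icc (0 : ℝ) 1)
    (hdyn : ∀ t i, 1 ≤ i → x (t + 1) i =
      α t i • x t i + ((1 - α t i) / ((pathNbhd ε x t i).card : ℝ)) •
        ∑ k ∈ pathNbhd ε x t i, x t k)
    (t : ℕ) (hprof : ∀ i, 1 ≤ i → ‖x t i - x t (i + 1)‖ ≤ ε) :
    ‖x (t + 1) 1 - x (t + 1) 2‖ ≤
      ((1 + α t 1) / 2) * ⨆ i : ℕ, ‖x t (i + 1) - x t (i + 2)‖ :=
  first_edge_bound_general d ε x α hα hdyn t hprof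
end

section
/- Interior edge bound in the path model: Suppose the profile at time t equals G, i.e. ‖x_i(t) − x_{i+1}(t)‖ ≤ ε for every i ≥ 1, and let A_t = sup_{i ≥ 1} ‖x_i(t) − x_{i+1}(t)‖. Then for every i ≥ 2, ‖x_i(t+1) − x_{i+1}(t+1)‖ ≤ A_t. -/
open Finset

section ConvexCombination

variable {E : Type*} [SeminormedAddCommGroup E] [NormedSpace ℝ E]

lemma norm_smul_add_smul_add_smul_le {c₁ c₂ c₃ A : ℝ} (hc₁ : 0 ≤ c₁) (hc₂ : 0 ≤ c₂)
    (hc₃ : 0 ≤ c₃) (hc : c₁ + c₂ + c₃ = 1) {u v w : E} (hu : ‖u‖ ≤ A) (hv : ‖v‖ ≤ A)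
    (hw : ‖w‖ ≤ A) :
    ‖c₁ • u + c₂ • v + c₃ • w‖ ≤ A :=
  calc ‖c₁ • u + c₂ • v + c₃ • w‖
      ≤ ‖c₁ • u‖ + ‖c₂ • v‖ + ‖c₃ • w‖ := norm_add₃_le
    _ = c₁ * ‖u‖ + c₂ * ‖v‖ + c₃ * ‖w‖ := by
      rw [norm_smul_of_nonneg hc₁, norm_smul_of_nonneg hc₂, norm_smul_of_nonneg hc₃]
    _ ≤ c₁ * A + c₂ * A + c₃ * A := by gcongr
    _ = A := by rw [← add_mul, ← add_mul, hc, one_mul]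

lemma norm_sub_threeAverage_le {p₀ p₁ p₂ p₃ : E} {a b A : ℝ} (ha : a ∈ Set.Icc (0 : ℝ) 1)
    (hb : b ∈ Set.Icc (0 : ℝ) 1) (h₀ : ‖p₀ - p₁‖ ≤ A) (h₁ : ‖p₁ - p₂‖ ≤ A)
    (h₂ : ‖p₂ - p₃‖ ≤ A) :
    ‖(a • p₁ + ((1 - a) / 3) • (p₀ + p₁ + p₂)) -
        (b • p₂ + ((1 - b) / 3) • (p₁ + p₂ + p₃))‖ ≤ A := by
  obtain ⟨ha₀, ha₁⟩ := ha
  obtain ⟨hb₀, hb₁⟩ := hb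
  have hcomb : (a • p₁ + ((1 - a) / 3) • (p₀ + p₁ + p₂)) -
      (b • p₂ + ((1 - b) / 3) • (p₁ + p₂ + p₃)) =
      ((1 - a) / 3) • (p₀ - p₁) + ((1 + a + b) / 3) • (p₁ - p₂) +
        ((1 - b) / 3) • (p₂ - p₃) := by
    module
  rw [hcomb]
  exact norm_smul_add_smul_add_smul_le (by linarith) (by linarith) (by linarith) (by ring)
    h₀ h₁ h₂

end ConvexCombination

section PathModel

variable {d : ℕ} {ε : ℝ} {x : ℕ → ℕ → EuclideanSpace ℝ (Fin d)} {t k : ℕ}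

lemma pathNbhd_succ_eq_triple (hk : 1 ≤ k) (hprev : ‖x t k - x t (k + 1)‖ ≤ ε)
    (hnext : ‖x t (k + 1) - x t (k + 2)‖ ≤ ε) :
    pathNbhd ε x t (k + 1) = {k, k + 1, k + 2} := by
  ext j
  simp only [pathNbhd, mem_filter, mem_range, mem_insert, mem_singleton]
  constructor
  · rintro ⟨-, -, rfl | ⟨rfl | h, -⟩⟩ <;> omega
  · rintro (rfl | rfl | rfl)
    · exact ⟨by omega, hk, Or.inr ⟨Or.inr rfl, norm_sub_rev (x t _) _ ▸ hprev⟩⟩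
    · exact ⟨by omega, by omega, Or.inl rfl⟩
    · exact ⟨by omega, by omega, Or.inr ⟨Or.inl rfl, hnext⟩⟩

lemma update_succ_eq_threeAverage {α : ℕ → ℕ → ℝ}
    (hdyn : ∀ i, 1 ≤ i → x (t + 1) i =
      α t i • x t i + ((1 - α t i) / ((pathNbhd ε x t i).card : ℝ)) •
        ∑ k ∈ pathNbhd ε x t i, x t k)
    (hk : 1 ≤ k) (hprev : ‖x t k - x t (k + 1)‖ ≤ ε)
    (hnext : ‖x t (k + 1) - x t (k + 2)‖ ≤ ε) :
    x (t + 1) (k + 1) = α t (k + 1) • x t (k + 1) +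
      ((1 - α t (k + 1)) / 3) • (x t k + x t (k + 1) + x t (k + 2)) := by
  rw [hdyn (k + 1) (by omega), pathNbhd_succ_eq_triple hk hprev hnext]
  simp [sum_insert, add_assoc]

end PathModel

theorem interior_edge_bound_general (d : ℕ) (ε : ℝ)
    (x : ℕ → ℕ → EuclideanSpace ℝ (Fin d)) (α : ℕ → ℕ → ℝ)
    (hα : ∀ t i, α t i ∈ Set.Icc (0 : ℝ) 1)
    (hdyn : ∀ t i, 1 ≤ i → x (t + 1) i =
      α t i • x t i + ((1 - α t i) / ((pathNbhd ε x t i).card : ℝ)) •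
        ∑ k ∈ pathNbhd ε x t i, x t k)
    (t : ℕ) (hprof : ∀ i, 1 ≤ i → ‖x t i - x t (i + 1)‖ ≤ ε) :
    ∀ i, 2 ≤ i → ‖x (t + 1) i - x (t + 1) (i + 1)‖ ≤
      ⨆ i : ℕ, ‖x t (i + 1) - x t (i + 2)‖ := by
  have hedge : ∀ j, ‖x t (j + 1) - x t (j + 2)‖ ≤ ⨆ i : ℕ, ‖x t (i + 1) - x t (i + 2)‖ :=
    le_ciSup ⟨ε, by rintro _ ⟨j, rfl⟩; exact hprof (j + 1) le_add_self⟩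
  intro i hi
  obtain ⟨m, rfl⟩ : ∃ m, i = m + 2 := ⟨i - 2, by omega⟩
  rw [update_succ_eq_threeAverage (hdyn t) (k := m + 1) le_add_self (hprof _ le_add_self)
      (hprof _ (by omega)),
    update_succ_eq_threeAverage (hdyn t) (k := m + 2) (by omega) (hprof _ (by omega))
      (hprof _ (by omega))]
  exact norm_sub_threeAverage_le (hα t _) (hα t _) (hedge m) (hedge (m + 1)) (hedge (m + 2))

/-- **Interior edge bound in the path model.** If the profile at time `t` equals `G`,
then with `A_t = sup_{i ≥ 1} ‖x_i(t) − x_{i+1}(t)‖` one has, for every `i ≥ 2`,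
`‖x_i(t+1) − x_{i+1}(t+1)‖ ≤ A_t`. -/
theorem interior_edge_bound (d : ℕ) (hd : 1 ≤ d) (ε : ℝ) (hε : 0 < ε)
    (x : ℕ → ℕ → EuclideanSpace ℝ (Fin d)) (α : ℕ → ℕ → ℝ)
    (hα : ∀ t i, α t i ∈ Set.Icc (0 : ℝ) 1)
    (hdyn : ∀ t i, 1 ≤ i → x (t + 1) i =
      α t i • x t i + ((1 - α t i) / ((pathNbhd ε x t i).card : ℝ)) •
        ∑ k ∈ pathNbhd ε x t i, x t k)
    (t : ℕ) (hprof : ∀ i, 1 ≤ i → ‖x t i - x t (i + 1)‖ ≤ ε) :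
    ∀ i, 2 ≤ i → ‖x (t + 1) i - x (t + 1) (i + 1)‖ ≤
      ⨆ i : ℕ, ‖x t (i + 1) - x t (i + 2)‖ :=
  interior_edge_bound_general d ε x α hα hdyn t hprof
end

section
/- Order preserving: In the one-dimensional path model (d = 1), if the profile at time t equals G, i.e. |x_i(t) − x_{i+1}(t)| ≤ ε for every i ≥ 1, and the sequence (x_i(t))_{i ≥ 1} is nondecreasing in i, then the profile at time t+1 also equals G and the sequence (x_i(t+1))_{i ≥ 1} is nondecreasing in i. -/
/-!
When the profile equals `G`, every vertex hears all of its path neighbours, so the update is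
`x_i(t+1) = α_i x_i + (1 - α_i) m_i` with `m_i` the mean of `x` over `{i-1, i, i+1} ∩ ℤ⁺`.
For a nondecreasing profile with gaps at most `ε`, both `x_i` and `m_i` are at most both
`x_{i+1}` and `m_{i+1}`, and each of the latter is within `ε` of each of the former; convex
combinations inherit both relations.
-/

/-- The update neighborhood of vertex `i ≥ 1` at time `t` in the one-dimensional
mixed HK model under group interaction on the path graph on `ℤ⁺` with edges `(i, i+1)`:
`N_i(t) = {j ∈ ℤ⁺ : j = i, or |i − j| = 1 and |x_i(t) − x_j(t)| ≤ ε}`. -/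
noncomputable def pathNbhd1 (ε : ℝ) (x : ℕ → ℕ → ℝ) (t i : ℕ) : Finset ℕ :=
  (Finset.range (i + 2)).filter fun j =>
    1 ≤ j ∧ (j = i ∨ ((j = i + 1 ∨ j + 1 = i) ∧ |x t i - x t j| ≤ ε))

lemma convex_combo_le_convex_combo {a b p q r s : ℝ} (ha : a ∈ Set.Icc (0 : ℝ) 1)
    (hb : b ∈ Set.Icc (0 : ℝ) 1) (hpr : p ≤ r) (hps : p ≤ s) (hqr : q ≤ r) (hqs : q ≤ s) :
    a * p + (1 - a) * q ≤ b * r + (1 - b) * s := by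
  obtain ⟨ha0, ha1⟩ := ha
  obtain ⟨hb0, hb1⟩ := hb
  have hr : a * p + (1 - a) * q ≤ r := by nlinarith
  have hs : a * p + (1 - a) * q ≤ s := by nlinarith
  nlinarith [mul_nonneg hb0 (sub_nonneg.2 hr), mul_nonneg (sub_nonneg.2 hb1) (sub_nonneg.2 hs)]

/-- Vertex `0` is not on the path; its value is junk. -/
noncomputable def pathMean (y : ℕ → ℝ) : ℕ → ℝ
  | 0 => 0
  | 1 => (y 1 + y 2) / 2
  | k + 2 => (y (k + 1) + y (k + 2) + y (k + 3)) / 3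

section PathMean

variable {y : ℕ → ℝ} {ε : ℝ}

lemma pathMean_le_of_monotone (hmono : ∀ i, 1 ≤ i → y i ≤ y (i + 1)) {i : ℕ} (hi : 1 ≤ i) :
    y i ≤ pathMean y (i + 1) ∧ pathMean y i ≤ y (i + 1) ∧
      pathMean y i ≤ pathMean y (i + 1) := by
  obtain ⟨k, rfl⟩ : ∃ k, i = k + 1 := ⟨i - 1, by omega⟩
  have h1 := hmono (k + 1) (by omega)
  have h2 := hmono (k + 2) (by omega)
  rcases k with _ | k
  · simp only [pathMean]
    refine ⟨?_, ?_, ?_⟩ <;> linarith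
  · have h0 := hmono (k + 1) (by omega)
    simp only [pathMean]
    refine ⟨?_, ?_, ?_⟩ <;> linarith

lemma pathMean_le_add_of_monotone (hmono : ∀ i, 1 ≤ i → y i ≤ y (i + 1))
    (hstep : ∀ i, 1 ≤ i → y (i + 1) ≤ y i + ε) {i : ℕ} (hi : 1 ≤ i) :
    y (i + 1) ≤ pathMean y i + ε ∧ pathMean y (i + 1) ≤ y i + ε ∧
      pathMean y (i + 1) ≤ pathMean y i + ε := by
  obtain ⟨k, rfl⟩ : ∃ k, i = k + 1 := ⟨i - 1, by omega⟩
  have h1 := hmono (k + 1) (by omega)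
  have h2 := hmono (k + 2) (by omega)
  have e1 := hstep (k + 1) (by omega)
  have e2 := hstep (k + 2) (by omega)
  rcases k with _ | k
  · simp only [pathMean]
    refine ⟨?_, ?_, ?_⟩ <;> linarith
  · have h0 := hmono (k + 1) (by omega)
    have e0 := hstep (k + 1) (by omega)
    simp only [pathMean]
    refine ⟨?_, ?_, ?_⟩ <;> linarith

end PathMean

section Neighbourhood

variable {ε : ℝ} {x : ℕ → ℕ → ℝ} {t : ℕ}

lemma pathNbhd1_one (h : |x t 1 - x t 2| ≤ ε) : pathNbhd1 ε x t 1 = {1, 2} := by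
  ext j
  simp only [pathNbhd1, Finset.mem_filter, Finset.mem_range, Finset.mem_insert,
    Finset.mem_singleton]
  constructor
  · rintro ⟨hj, hj1, h1 | ⟨h2 | h2, _⟩⟩ <;> omega
  · rintro (rfl | rfl)
    · exact ⟨by omega, le_rfl, Or.inl rfl⟩
    · exact ⟨by omega, by omega, Or.inr ⟨Or.inl rfl, h⟩⟩

lemma pathNbhd1_add_two {k : ℕ} (hl : |x t (k + 2) - x t (k + 1)| ≤ ε)
    (hr : |x t (k + 2) - x t (k + 3)| ≤ ε) :
    pathNbhd1 ε x t (k + 2) = {k + 1, k + 2, k + 3} := by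
  ext j
  simp only [pathNbhd1, Finset.mem_filter, Finset.mem_range, Finset.mem_insert,
    Finset.mem_singleton]
  constructor
  · rintro ⟨hj, hj1, h | ⟨h | h, _⟩⟩ <;> omega
  · rintro (rfl | rfl | rfl)
    · exact ⟨by omega, by omega, Or.inr ⟨Or.inr rfl, hl⟩⟩
    · exact ⟨by omega, by omega, Or.inl rfl⟩
    · exact ⟨by omega, by omega, Or.inr ⟨Or.inl rfl, hr⟩⟩

lemma sum_pathNbhd1_div_card (hprof : ∀ i, 1 ≤ i → |x t i - x t (i + 1)| ≤ ε)
    {i : ℕ} (hi : 1 ≤ i) :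
    (∑ k ∈ pathNbhd1 ε x t i, x t k) / (pathNbhd1 ε x t i).card = pathMean (x t) i := by
  obtain ⟨k, rfl⟩ : ∃ k, i = k + 1 := ⟨i - 1, by omega⟩
  rcases k with _ | k
  · rw [pathNbhd1_one (hprof 1 le_rfl)]
    simp [pathMean]
  · rw [pathNbhd1_add_two (abs_sub_comm (x t (k + 1)) _ ▸ hprof (k + 1) (by omega))
      (hprof (k + 2) (by omega))]
    rw [Finset.sum_insert (by simp), Finset.sum_pair (by omega),
      Finset.card_insert_of_notMem (by simp), Finset.card_pair (by omega)]
    simp only [pathMean]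
    push_cast
    ring

end Neighbourhood

theorem order_preserving_general (ε : ℝ)
    (x : ℕ → ℕ → ℝ) (α : ℕ → ℕ → ℝ)
    (hα : ∀ t i, α t i ∈ Set.Icc (0 : ℝ) 1)
    (hdyn : ∀ t i, 1 ≤ i → x (t + 1) i =
      α t i * x t i + ((1 - α t i) / ((pathNbhd1 ε x t i).card : ℝ)) *
        ∑ k ∈ pathNbhd1 ε x t i, x t k)
    (t : ℕ) (hprof : ∀ i, 1 ≤ i → |x t i - x t (i + 1)| ≤ ε)
    (hmono : ∀ i, 1 ≤ i → x t i ≤ x t (i + 1)) :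
    (∀ i, 1 ≤ i → |x (t + 1) i - x (t + 1) (i + 1)| ≤ ε) ∧
    (∀ i, 1 ≤ i → x (t + 1) i ≤ x (t + 1) (i + 1)) := by
  have hupdate : ∀ i, 1 ≤ i →
      x (t + 1) i = α t i * x t i + (1 - α t i) * pathMean (x t) i := fun i hi => by
    rw [hdyn t i hi, ← sum_pathNbhd1_div_card hprof hi, div_mul_eq_mul_div, mul_div_assoc]
  have hstep : ∀ i, 1 ≤ i → x t (i + 1) ≤ x t i + ε := fun i hi => by
    linarith [(abs_sub_le_iff.mp (hprof i hi)).2]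
  have hmono' : ∀ i, 1 ≤ i → x (t + 1) i ≤ x (t + 1) (i + 1) := fun i hi => by
    obtain ⟨h1, h2, h3⟩ := pathMean_le_of_monotone hmono hi
    rw [hupdate i hi, hupdate (i + 1) (by omega)]
    exact convex_combo_le_convex_combo (hα t i) (hα t (i + 1)) (hmono i hi) h1 h2 h3
  refine ⟨fun i hi => ?_, hmono'⟩
  obtain ⟨h1, h2, h3⟩ := pathMean_le_add_of_monotone hmono hstep hi
  have hshift := convex_combo_le_convex_combo (hα t (i + 1)) (hα t i) (hstep i hi) h1 h2 h3
  rw [abs_sub_comm, abs_of_nonneg (sub_nonneg.2 (hmono' i hi)), sub_le_iff_le_add,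
    hupdate i hi, hupdate (i + 1) (by omega)]
  linarith

/-- **Order preserving.** In the one-dimensional path model under group interaction,
if the profile at time `t` equals `G` and `(x_i(t))_{i ≥ 1}` is nondecreasing in `i`,
then the profile at time `t+1` equals `G` and `(x_i(t+1))_{i ≥ 1}` is nondecreasing. -/
theorem order_preserving (ε : ℝ) (hε : 0 < ε)
    (x : ℕ → ℕ → ℝ) (α : ℕ → ℕ → ℝ)
    (hα : ∀ t i, α t i ∈ Set.Icc (0 : ℝ) 1)
    (hdyn : ∀ t i, 1 ≤ i → x (t + 1) i =
      α t i * x t i + ((1 - α t i) / ((pathNbhd1 ε x t i).card : ℝ)) *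
        ∑ k ∈ pathNbhd1 ε x t i, x t k)
    (t : ℕ) (hprof : ∀ i, 1 ≤ i → |x t i - x t (i + 1)| ≤ ε)
    (hmono : ∀ i, 1 ≤ i → x t i ≤ x t (i + 1)) :
    (∀ i, 1 ≤ i → |x (t + 1) i - x (t + 1) (i + 1)| ≤ ε) ∧
    (∀ i, 1 ≤ i → x (t + 1) i ≤ x (t + 1) (i + 1)) :=
  order_preserving_general ε x α hα hdyn t hprof hmono
end

section
/- Fixed-point counterexample on the two-sided infinite path: Let the social graph have vertex set ℤ with edges (i, i+1) for all i ∈ ℤ, let the confidence threshold be ε = 1, let x_i(0) = i for all i ∈ ℤ, and let the stubbornness levels α_i(t) ∈ [0,1] be arbitrary. Under group interaction, x_i(t) = i for all i ∈ ℤ and all t ∈ ℕ; in particular no consensus is reached. -/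
/-! Opinions `x_i = i` sit at distance exactly `1` from both neighbours, so with `ε = 1`
every vertex averages over `{i - 1, i, i + 1}`, whose mean is `i` again; whatever the
stubbornness, the update is a combination of `x_i` with itself. -/

/-- The update neighborhood of vertex `i ∈ ℤ` at time `t` in the one-dimensional
mixed HK model under group interaction on the two-sided infinite path on `ℤ` with
edges `(i, i+1)`:
`N_i(t) = {j ∈ ℤ : j = i, or |i − j| = 1 and |x_i(t) − x_j(t)| ≤ ε}`. -/
noncomputable def pathNbhdZ (ε : ℝ) (x : ℕ → ℤ → ℝ) (t : ℕ) (i : ℤ) : Finset ℤ :=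
  ({i - 1, i, i + 1} : Finset ℤ).filter fun j =>
    j = i ∨ ((j = i + 1 ∨ j = i - 1) ∧ |x t i - x t j| ≤ ε)

theorem pathNbhdZ_eq_of_neighbors_close {ε : ℝ} {x : ℕ → ℤ → ℝ} {t : ℕ} {i : ℤ}
    (hprev : |x t i - x t (i - 1)| ≤ ε) (hnext : |x t i - x t (i + 1)| ≤ ε) :
    pathNbhdZ ε x t i = {i - 1, i, i + 1} := by
  refine Finset.filter_true_of_mem fun j hj => ?_
  simp only [Finset.mem_insert, Finset.mem_singleton] at hj
  rcases hj with rfl | rfl | rfl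
  · exact Or.inr ⟨Or.inr rfl, hprev⟩
  · exact Or.inl rfl
  · exact Or.inr ⟨Or.inl rfl, hnext⟩

theorem card_pred_self_succ (i : ℤ) : ({i - 1, i, i + 1} : Finset ℤ).card = 3 := by
  rw [Finset.card_insert_of_notMem, Finset.card_pair] <;> simp; omega

theorem sum_pred_self_succ_cast (i : ℤ) :
    ∑ k ∈ ({i - 1, i, i + 1} : Finset ℤ), (k : ℝ) = 3 * i := by
  rw [Finset.sum_insert (by simp; omega), Finset.sum_pair (by simp)]
  push_cast
  ring

theorem mul_add_div_card_mul_sum_eq {ι : Type*} (s : Finset ι) (f : ι → ℝ) (a c : ℝ)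
    (hs : s.Nonempty) (hmean : ∑ k ∈ s, f k = s.card * c) :
    a * c + ((1 - a) / s.card) * ∑ k ∈ s, f k = c := by
  have hcard : (s.card : ℝ) ≠ 0 := by exact_mod_cast hs.card_pos.ne'
  rw [hmean]
  field_simp
  ring

theorem fixed_point_counterexample_general
    (x : ℕ → ℤ → ℝ) (α : ℕ → ℤ → ℝ)
    (hx0 : ∀ i : ℤ, x 0 i = (i : ℝ))
    (hdyn : ∀ t i, x (t + 1) i =
      α t i * x t i +
        ((1 - α t i) / ((pathNbhdZ 1 x t i).card : ℝ)) *
          ∑ k ∈ pathNbhdZ 1 x t i, x t k) :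
    ∀ t : ℕ, ∀ i : ℤ, x t i = (i : ℝ) := by
  intro t
  induction t with
  | zero => exact hx0
  | succ t ih =>
    intro i
    have hN : pathNbhdZ 1 x t i = {i - 1, i, i + 1} :=
      pathNbhdZ_eq_of_neighbors_close (by simp [ih]) (by simp [ih])
    rw [hdyn, hN, ih]
    refine mul_add_div_card_mul_sum_eq _ _ _ _ (by simp) ?_
    rw [Finset.sum_congr rfl fun k _ => ih k, sum_pred_self_succ_cast, card_pred_self_succ]
    norm_num

/-- **Fixed-point counterexample on the two-sided infinite path.** With threshold
`ε = 1`, initial opinions `x_i(0) = i` for all `i ∈ ℤ`, and arbitrary stubbornness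
levels, the group-interaction dynamics satisfy `x_i(t) = i` for all `i ∈ ℤ` and all
`t ∈ ℕ`; in particular no consensus is reached. -/
theorem fixed_point_counterexample
    (x : ℕ → ℤ → ℝ) (α : ℕ → ℤ → ℝ)
    (hα : ∀ t i, α t i ∈ Set.Icc (0 : ℝ) 1)
    (hx0 : ∀ i : ℤ, x 0 i = (i : ℝ))
    (hdyn : ∀ t i, x (t + 1) i =
      α t i * x t i +
        ((1 - α t i) / ((pathNbhdZ 1 x t i).card : ℝ)) *
          ∑ k ∈ pathNbhdZ 1 x t i, x t k) :
    ∀ t : ℕ, ∀ i : ℤ, x t i = (i : ℝ) :=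
  fixed_point_counterexample_general x α hx0 hdyn
end

section
/- Regularity preserving with a quantitative contraction: In the regular-graph group-interaction model, assume α_i(t) = α_t for all i and t, and |N_i^s ∩ N_j^s| ≥ 2r/3 for every edge (i,j) of G. If the profile at time t equals G, i.e. ‖x_i(t) − x_j(t)‖ ≤ ε for every edge (i,j), then the profile at time t+1 equals G; moreover, with A_t = sup over edges (i,j) of ‖x_i(t) − x_j(t)‖ and m = inf over edges (i,j) of |N_i^s ∩ N_j^s|, one has A_{t+1} ≤ (A_t / r) · ( r − (3m − 2r)(1 − α_t) ). -/
/-!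
Once every edge of `G` is within the confidence threshold, each agent averages over its whole
closed neighbourhood, which has `r` elements. For an edge `(i, j)` with `s = |N_i^s ∩ N_j^s|`,
the common neighbours cancel in `x_i(t+1) - x_j(t+1)`, leaving the `r - s` private neighbours of
each endpoint. Comparing each private neighbour of `i` with `i`, each private neighbour of `j`
with `j`, and `i` with `j`, bounds what is left by `3 (r - s) A_t`, so
`A_{t+1} ≤ α_t A_t + (1 - α_t) · 3 (r - s) A_t / r`, which is the claimed factor. It is at most
`1` because `s ≥ 2r/3`, which keeps every edge within `ε`.
-/

open Finset
open scoped Classical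

/-- The closed social neighborhood `N_i^s = {i} ∪ {j : (i,j) ∈ E}` of vertex `i`
in a locally finite simple graph `G` on `ℤ⁺`. -/
noncomputable def closedNbhd (G : SimpleGraph ℕ+) [∀ v, Fintype (G.neighborSet v)]
    (i : ℕ+) : Finset ℕ+ :=
  insert i (G.neighborFinset i)

/-- The update neighborhood under group interaction:
`N_i(t) = {j : j = i, or (i,j) ∈ E and ‖x_i(t) − x_j(t)‖ ≤ ε}`. -/
noncomputable def updNbhd {d : ℕ} (G : SimpleGraph ℕ+) [∀ v, Fintype (G.neighborSet v)]
    (ε : ℝ) (x : ℕ → ℕ+ → EuclideanSpace ℝ (Fin d)) (t : ℕ) (i : ℕ+) : Finset ℕ+ :=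
  (closedNbhd G i).filter fun j => j = i ∨ (G.Adj i j ∧ ‖x t i - x t j‖ ≤ ε)

section Averages

variable {ι E : Type*} [DecidableEq ι] [SeminormedAddCommGroup E]

theorem norm_sum_sub_sum_le {N M : Finset ι} (hNM : #N = #M) {y : ι → E} {i j : ι} {B : ℝ}
    (hij : ‖y i - y j‖ ≤ B) (hi : ∀ k ∈ N \ M, ‖y k - y i‖ ≤ B)
    (hj : ∀ k ∈ M \ N, ‖y k - y j‖ ≤ B) :
    ‖∑ k ∈ N, y k - ∑ k ∈ M, y k‖ ≤ 3 * #(N \ M) * B := by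
  have hcard : #(M \ N) = #(N \ M) := card_sdiff_comm hNM.symm
  have hsplit : ∑ k ∈ N, y k - ∑ k ∈ M, y k =
      ∑ k ∈ N \ M, (y k - y i) - ∑ k ∈ M \ N, (y k - y j) + #(N \ M) • (y i - y j) := by
    rw [← sum_sdiff_sub_sum_sdiff, sum_sub_distrib, sum_sub_distrib, sum_const, sum_const, hcard,
      nsmul_sub]
    abel
  have hnorm_sum : ∀ (D : Finset ι) (c : ι), (∀ k ∈ D, ‖y k - y c‖ ≤ B) →
      ‖∑ k ∈ D, (y k - y c)‖ ≤ #D * B := fun D c hD =>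
    (norm_sum_le _ _).trans (by simpa using sum_le_card_nsmul _ _ _ hD)
  calc ‖∑ k ∈ N, y k - ∑ k ∈ M, y k‖
      ≤ ‖∑ k ∈ N \ M, (y k - y i)‖ + ‖∑ k ∈ M \ N, (y k - y j)‖ +
          ‖#(N \ M) • (y i - y j)‖ := by
        rw [hsplit]
        exact (norm_add_le _ _).trans (by gcongr; exact norm_sub_le _ _)
    _ ≤ #(N \ M) * B + #(N \ M) * B + #(N \ M) * B := by
        gcongr
        · exact hnorm_sum _ _ hi
        · exact hcard ▸ hnorm_sum _ _ hj
        · exact (norm_nsmul_le ..).trans (by gcongr)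
    _ = 3 * #(N \ M) * B := by ring

theorem norm_average_sub_average_le [NormedSpace ℝ E] {N M : Finset ι} {r : ℕ}
    (hr : 0 < r) (hN : #N = r) (hM : #M = r) {α : ℝ} (hα : α ∈ Set.Icc (0 : ℝ) 1)
    {y : ι → E} {i j : ι} {B : ℝ} (hij : ‖y i - y j‖ ≤ B) (hi : ∀ k ∈ N \ M, ‖y k - y i‖ ≤ B)
    (hj : ∀ k ∈ M \ N, ‖y k - y j‖ ≤ B) :
    ‖(α • y i + ((1 - α) / r) • ∑ k ∈ N, y k) -
        (α • y j + ((1 - α) / r) • ∑ k ∈ M, y k)‖ ≤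
      B / r * (r - (3 * #(N ∩ M) - 2 * r) * (1 - α)) := by
  obtain ⟨hα0, hα1⟩ := hα
  have hβ : 0 ≤ (1 - α) / r := div_nonneg (by linarith) (Nat.cast_nonneg r)
  have hsdiff : (#(N \ M) : ℝ) = r - #(N ∩ M) := by
    rw [← hN, ← card_sdiff_add_card_inter N M, Nat.cast_add]
    ring
  calc _ = ‖α • (y i - y j) + ((1 - α) / r) • (∑ k ∈ N, y k - ∑ k ∈ M, y k)‖ := by
        rw [smul_sub, smul_sub]
        abel_nf
    _ ≤ α * ‖y i - y j‖ + (1 - α) / r * ‖∑ k ∈ N, y k - ∑ k ∈ M, y k‖ := by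
        refine (norm_add_le _ _).trans ?_
        rw [norm_smul_of_nonneg hα0, norm_smul_of_nonneg hβ]
    _ ≤ α * B + (1 - α) / r * (3 * #(N \ M) * B) := by
        gcongr
        exact norm_sum_sub_sum_le (hN.trans hM.symm) hij hi hj
    _ = B / r * (r - (3 * #(N ∩ M) - 2 * r) * (1 - α)) := by
        rw [hsdiff]
        field_simp
        ring

end Averages

theorem contraction_factor_le {r s α B : ℝ} (hr : 0 < r) (hs : 2 * r / 3 ≤ s)
    (hα : α ∈ Set.Icc (0 : ℝ) 1) (hB : 0 ≤ B) :
    B / r * (r - (3 * s - 2 * r) * (1 - α)) ≤ B := by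
  obtain ⟨hα0, hα1⟩ := hα
  rw [div_mul_eq_mul_div, div_le_iff₀ hr]
  have : 0 ≤ (3 * s - 2 * r) * (1 - α) := mul_nonneg (by linarith) (by linarith)
  nlinarith

section Graph

variable {G : SimpleGraph ℕ+} [∀ v, Fintype (G.neighborSet v)]

theorem mem_closedNbhd {i j : ℕ+} : j ∈ closedNbhd G i ↔ j = i ∨ G.Adj i j := by
  simp [closedNbhd]

theorem card_closedNbhd (i : ℕ+) : #(closedNbhd G i) = G.degree i + 1 := by
  rw [closedNbhd, card_insert_of_notMem (by simp), G.card_neighborFinset_eq_degree]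

theorem adj_of_mem_closedNbhd_sdiff {i j k : ℕ+} (hij : G.Adj i j)
    (hk : k ∈ closedNbhd G i \ closedNbhd G j) : G.Adj i k := by
  rw [mem_sdiff, mem_closedNbhd, mem_closedNbhd] at hk
  obtain ⟨rfl | hik, hkj⟩ := hk
  · exact absurd (Or.inr hij.symm) hkj
  · exact hik

theorem updNbhd_eq_closedNbhd {d : ℕ} {ε : ℝ} {x : ℕ → ℕ+ → EuclideanSpace ℝ (Fin d)} {t : ℕ}
    (hprof : ∀ i j, G.Adj i j → ‖x t i - x t j‖ ≤ ε) (i : ℕ+) :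
    updNbhd G ε x t i = closedNbhd G i := by
  refine filter_true_of_mem fun j hj => ?_
  rcases mem_closedNbhd.1 hj with rfl | hij
  · exact Or.inl rfl
  · exact Or.inr ⟨hij, hprof i j hij⟩

theorem norm_sub_succ_le_of_adj {d r : ℕ} (hr : 1 ≤ r) (hreg : ∀ i, G.degree i = r - 1)
    {ε : ℝ} {x : ℕ → ℕ+ → EuclideanSpace ℝ (Fin d)} {α : ℝ} (hα : α ∈ Set.Icc (0 : ℝ) 1)
    {t : ℕ} (hdyn : ∀ i, x (t + 1) i =
      α • x t i + ((1 - α) / (#(updNbhd G ε x t i) : ℝ)) • ∑ k ∈ updNbhd G ε x t i, x t k)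
    (hprof : ∀ i j, G.Adj i j → ‖x t i - x t j‖ ≤ ε)
    {B : ℝ} (hB : ∀ i j, G.Adj i j → ‖x t i - x t j‖ ≤ B) {i j : ℕ+} (hij : G.Adj i j) :
    ‖x (t + 1) i - x (t + 1) j‖ ≤
      B / r * (r - (3 * #(closedNbhd G i ∩ closedNbhd G j) - 2 * r) * (1 - α)) := by
  have hcard : ∀ i, #(closedNbhd G i) = r := fun i => by rw [card_closedNbhd, hreg]; omega
  rw [hdyn, hdyn, updNbhd_eq_closedNbhd hprof, updNbhd_eq_closedNbhd hprof, hcard, hcard]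
  exact norm_average_sub_average_le hr (hcard i) (hcard j) hα (hB i j hij)
    (fun k hk => hB k i (adj_of_mem_closedNbhd_sdiff hij hk).symm)
    (fun k hk => hB k j (adj_of_mem_closedNbhd_sdiff hij.symm hk).symm)

end Graph

theorem regularity_preserving_general (d r : ℕ) (hr : 1 ≤ r)
    (ε : ℝ)
    (G : SimpleGraph ℕ+) [∀ v, Fintype (G.neighborSet v)]
    (hreg : ∀ i, G.degree i = r - 1)
    (x : ℕ → ℕ+ → EuclideanSpace ℝ (Fin d)) (α : ℕ → ℝ)
    (hα : ∀ t, α t ∈ Set.Icc (0 : ℝ) 1)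
    (hcommon : ∀ i j, G.Adj i j →
      (2 * r : ℝ) / 3 ≤ ((closedNbhd G i ∩ closedNbhd G j).card : ℝ))
    (hdyn : ∀ t i, x (t + 1) i =
      α t • x t i + ((1 - α t) / ((updNbhd G ε x t i).card : ℝ)) •
        ∑ k ∈ updNbhd G ε x t i, x t k)
    (t : ℕ) (hprof : ∀ i j, G.Adj i j → ‖x t i - x t j‖ ≤ ε) :
    (∀ i j, G.Adj i j → ‖x (t + 1) i - x (t + 1) j‖ ≤ ε) ∧
    (⨆ p : {p : ℕ+ × ℕ+ // G.Adj p.1 p.2}, ‖x (t + 1) p.val.1 - x (t + 1) p.val.2‖) ≤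
      ((⨆ p : {p : ℕ+ × ℕ+ // G.Adj p.1 p.2}, ‖x t p.val.1 - x t p.val.2‖) / (r : ℝ)) *
        ((r : ℝ) -
          (3 * (⨅ p : {p : ℕ+ × ℕ+ // G.Adj p.1 p.2},
              ((closedNbhd G p.val.1 ∩ closedNbhd G p.val.2).card : ℝ)) - 2 * r) *
            (1 - α t)) := by
  have hedge {B : ℝ} (hB : ∀ i j, G.Adj i j → ‖x t i - x t j‖ ≤ B) {i j : ℕ+}
      (hij : G.Adj i j) :=
    norm_sub_succ_le_of_adj hr hreg (hα t) (hdyn t) hprof hB hij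
  refine ⟨fun i j hij => ?_, ?_⟩
  · have hε : 0 ≤ ε := (norm_nonneg _).trans (hprof i j hij)
    exact (hedge hprof hij).trans
      (contraction_factor_le (by positivity) (hcommon i j hij) (hα t) hε)
  rcases isEmpty_or_nonempty {p : ℕ+ × ℕ+ // G.Adj p.1 p.2} with hE | hE
  · simp [Real.iSup_of_isEmpty]
  set A := ⨆ p : {p : ℕ+ × ℕ+ // G.Adj p.1 p.2}, ‖x t p.val.1 - x t p.val.2‖
  have hA : ∀ p : {p : ℕ+ × ℕ+ // G.Adj p.1 p.2}, ‖x t p.val.1 - x t p.val.2‖ ≤ A :=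
    le_ciSup ⟨ε, by rintro _ ⟨p, rfl⟩; exact hprof _ _ p.2⟩
  have hA0 : 0 ≤ A := (norm_nonneg _).trans (hA hE.some)
  refine ciSup_le fun p => (hedge (fun i j hij => hA ⟨(i, j), hij⟩) p.2).trans ?_
  have hm : (⨅ q : {p : ℕ+ × ℕ+ // G.Adj p.1 p.2},
      ((closedNbhd G q.val.1 ∩ closedNbhd G q.val.2).card : ℝ)) ≤
      (closedNbhd G p.val.1 ∩ closedNbhd G p.val.2).card :=
    ciInf_le ⟨0, by rintro _ ⟨q, rfl⟩; positivity⟩ p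
  have hα1 : 0 ≤ 1 - α t := sub_nonneg.2 (hα t).2
  gcongr

/-- **Regularity preserving with a quantitative contraction.** Let `G` be an
`(r−1)`-regular locally finite simple graph on `ℤ⁺`, let all stubbornness levels
coincide (`α_i(t) = α_t`), and assume `|N_i^s ∩ N_j^s| ≥ 2r/3` for every edge `(i,j)`.
If the profile at time `t` equals `G` (i.e. `‖x_i(t) − x_j(t)‖ ≤ ε` for every edge),
then the profile at time `t+1` equals `G`, and moreover, with
`A_t = sup_{(i,j) ∈ E} ‖x_i(t) − x_j(t)‖` and `m = inf_{(i,j) ∈ E} |N_i^s ∩ N_j^s|`,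
one has `A_{t+1} ≤ (A_t / r) · (r − (3m − 2r)(1 − α_t))`. -/
theorem regularity_preserving (d r : ℕ) (hd : 1 ≤ d) (hr : 1 ≤ r)
    (ε : ℝ) (hε : 0 < ε)
    (G : SimpleGraph ℕ+) [∀ v, Fintype (G.neighborSet v)] [DecidableRel G.Adj]
    (hreg : ∀ i, G.degree i = r - 1)
    (x : ℕ → ℕ+ → EuclideanSpace ℝ (Fin d)) (α : ℕ → ℝ)
    (hα : ∀ t, α t ∈ Set.Icc (0 : ℝ) 1)
    (hcommon : ∀ i j, G.Adj i j →
      (2 * r : ℝ) / 3 ≤ ((closedNbhd G i ∩ closedNbhd G j).card : ℝ))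
    (hdyn : ∀ t i, x (t + 1) i =
      α t • x t i + ((1 - α t) / ((updNbhd G ε x t i).card : ℝ)) •
        ∑ k ∈ updNbhd G ε x t i, x t k)
    (t : ℕ) (hprof : ∀ i j, G.Adj i j → ‖x t i - x t j‖ ≤ ε) :
    (∀ i j, G.Adj i j → ‖x (t + 1) i - x (t + 1) j‖ ≤ ε) ∧
    (⨆ p : {p : ℕ+ × ℕ+ // G.Adj p.1 p.2}, ‖x (t + 1) p.val.1 - x (t + 1) p.val.2‖) ≤
      ((⨆ p : {p : ℕ+ × ℕ+ // G.Adj p.1 p.2}, ‖x t p.val.1 - x t p.val.2‖) / (r : ℝ)) *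
        ((r : ℝ) -
          (3 * (⨅ p : {p : ℕ+ × ℕ+ // G.Adj p.1 p.2},
              ((closedNbhd G p.val.1 ∩ closedNbhd G p.val.2).card : ℝ)) - 2 * r) *
            (1 - α t)) :=
  regularity_preserving_general d r hr ε G hreg x α hα hcommon hdyn t hprof
end

section
/- Supermartingale inequality for pair interaction (one step, n individuals): In the finite pair-interaction model with equal rates, define Z_p(t) = Σ_{i,j ∈ [n]} ‖x_i(t) − x_j(t)‖². Then for every t, Z_p(t) − Z_p(t+1) ≥ 4 Σ_{i ∈ [n]} ‖x_i(t) − x_i(t+1)‖². -/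
/-!
For any family `y` of `n` points, `∑ i, ∑ j, ‖y i - y j‖² = 2n ∑ i, ‖y i‖² - 2‖∑ i, y i‖²`,
and a pair-interaction step preserves `∑ i, y i`; so `Z_p` drops by `2n` times the drop of the
energy `∑ i, ‖y i‖²`. A pair at distance vector `w` that moves by the fraction `c ≤ 1/2` loses
energy `2c(1 - c)‖w‖² ≥ 2c²‖w‖²`, which is exactly its total squared displacement. Hence, with
`y'` the next state, `Z_p` drops by at least `2n ∑ i, ‖y i - y' i‖²`, and `2n ≥ 4` unless
`n ≤ 1`, when nobody moves.
-/

open Finset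

section PairAveraging

variable {ι E : Type*} [Fintype ι] [NormedAddCommGroup E] [InnerProductSpace ℝ E]

theorem sum_sum_norm_sub_sq (y : ι → E) :
    ∑ i, ∑ j, ‖y i - y j‖ ^ 2 = 2 * Fintype.card ι * ∑ i, ‖y i‖ ^ 2 - 2 * ‖∑ i, y i‖ ^ 2 := by
  simp_rw [norm_sub_sq_real, sum_add_distrib, sum_sub_distrib, ← mul_sum, ← inner_sum,
    ← sum_inner, real_inner_self_eq_norm_sq, sum_const, card_univ]
  simp only [nsmul_eq_mul, ← mul_sum]
  ring

variable [DecidableEq ι]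

theorem norm_sub_pair_move_sq_le (a b : E) {c : ℝ} (hc₀ : 0 ≤ c) (hc₁ : c ≤ 1 / 2) :
    ‖a - (a + c • (b - a))‖ ^ 2 + ‖b - (b + c • (a - b))‖ ^ 2 ≤
      ‖a‖ ^ 2 + ‖b‖ ^ 2 - (‖a + c • (b - a)‖ ^ 2 + ‖b + c • (a - b)‖ ^ 2) := by
  have key : inner ℝ b (b - a) - inner ℝ a (b - a) = ‖b - a‖ ^ 2 := by
    rw [← inner_sub_left, real_inner_self_eq_norm_sq]
  rw [← neg_sub b a, smul_neg, ← sub_eq_add_neg]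
  generalize b - a = w at key ⊢
  simp only [sub_add_cancel_left, sub_sub_cancel, norm_neg, norm_sub_sq_real, norm_add_sq_real,
    norm_smul, inner_smul_right, mul_pow, Real.norm_eq_abs, sq_abs]
  nlinarith [mul_nonneg (mul_nonneg hc₀ (by linarith : 0 ≤ 1 - 2 * c)) (sq_nonneg ‖w‖)]

theorem sum_eq_sum_pairs {β : Type*} [AddCommMonoid β] {A : Finset (ι × ι)}
    (hne : ∀ p ∈ A, p.1 ≠ p.2)
    (hdisj : (A : Set (ι × ι)).PairwiseDisjoint fun p => ({p.1, p.2} : Finset ι))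
    {f : ι → β} (hf : ∀ k, (∀ p ∈ A, k ≠ p.1 ∧ k ≠ p.2) → f k = 0) :
    ∑ k, f k = ∑ p ∈ A, (f p.1 + f p.2) := by
  have hsupp : ∀ k ∉ A.biUnion fun p => {p.1, p.2}, f k = 0 := by
    intro k hk
    refine hf k fun p hp => ?_
    simpa [not_or] using fun h => hk (mem_biUnion.2 ⟨p, hp, h⟩)
  rw [← sum_subset (subset_univ _) fun k _ hk => hsupp k hk, sum_biUnion hdisj]
  exact sum_congr rfl fun p hp => sum_pair (hne p hp)

structure IsPairAveragingStep (A : Finset (ι × ι)) (c : ι × ι → ℝ) (y y' : ι → E) : Prop where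
  ne : ∀ p ∈ A, p.1 ≠ p.2
  pairwiseDisjoint : (A : Set (ι × ι)).PairwiseDisjoint fun p => ({p.1, p.2} : Finset ι)
  rate_mem : ∀ p ∈ A, c p ∈ Set.Icc 0 (1 / 2)
  move_fst : ∀ p ∈ A, y' p.1 = y p.1 + c p • (y p.2 - y p.1)
  move_snd : ∀ p ∈ A, y' p.2 = y p.2 + c p • (y p.1 - y p.2)
  fixed : ∀ k, (∀ p ∈ A, k ≠ p.1 ∧ k ≠ p.2) → y' k = y k

namespace IsPairAveragingStep

variable {A : Finset (ι × ι)} {c : ι × ι → ℝ} {y y' : ι → E}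

theorem sum_eq_sum_pairs (h : IsPairAveragingStep A c y y') {β : Type*} [AddCommMonoid β]
    {f : ι → β} (hf : ∀ k, y' k = y k → f k = 0) :
    ∑ k, f k = ∑ p ∈ A, (f p.1 + f p.2) :=
  _root_.sum_eq_sum_pairs h.ne h.pairwiseDisjoint fun k hk => hf k (h.fixed k hk)

theorem sum_eq (h : IsPairAveragingStep A c y y') : ∑ k, y' k = ∑ k, y k := by
  rw [← sub_eq_zero, ← sum_sub_distrib, h.sum_eq_sum_pairs fun k hk => by rw [hk, sub_self]]
  refine sum_eq_zero fun p hp => ?_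
  rw [h.move_fst p hp, h.move_snd p hp, ← neg_sub (y p.1) (y p.2), smul_neg]
  abel

theorem sum_norm_sub_sq_le (h : IsPairAveragingStep A c y y') :
    ∑ k, ‖y k - y' k‖ ^ 2 ≤ ∑ k, ‖y k‖ ^ 2 - ∑ k, ‖y' k‖ ^ 2 := by
  rw [← sub_nonpos, ← sum_sub_distrib, ← sum_sub_distrib,
    h.sum_eq_sum_pairs fun k hk => by rw [hk, sub_self, norm_zero]; ring]
  refine sum_nonpos fun p hp => ?_
  obtain ⟨hc₀, hc₁⟩ := h.rate_mem p hp
  have := norm_sub_pair_move_sq_le (y p.1) (y p.2) hc₀ hc₁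
  rw [h.move_fst p hp, h.move_snd p hp]
  linarith

theorem eq_of_card_le_one (h : IsPairAveragingStep A c y y') (hcard : Fintype.card ι ≤ 1) :
    y' = y := by
  have : Subsingleton ι := Fintype.card_le_one_iff_subsingleton.1 hcard
  exact funext fun k => h.fixed k fun p hp => absurd (Subsingleton.elim _ _) (h.ne p hp)

theorem four_mul_sum_norm_sub_sq_le (h : IsPairAveragingStep A c y y') :
    4 * ∑ k, ‖y k - y' k‖ ^ 2 ≤ ∑ i, ∑ j, ‖y i - y j‖ ^ 2 - ∑ i, ∑ j, ‖y' i - y' j‖ ^ 2 := by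
  rcases le_or_gt (Fintype.card ι) 1 with hcard | hcard
  · simp [h.eq_of_card_le_one hcard]
  have hcard : (2 : ℝ) ≤ Fintype.card ι := by exact_mod_cast hcard
  have hdrop := h.sum_norm_sub_sq_le
  rw [sum_sum_norm_sub_sq, sum_sum_norm_sub_sq, h.sum_eq]
  nlinarith [sum_nonneg fun k (_ : k ∈ univ) => sq_nonneg ‖y k - y' k‖]

end IsPairAveragingStep

end PairAveraging

theorem pair_interaction_supermartingale_general (n d : ℕ)
    (ε : ℝ)
    (x : ℕ → Fin n → EuclideanSpace ℝ (Fin d))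
    (M : ℕ → Finset (Fin n × Fin n)) (μ : ℕ → Fin n × Fin n → ℝ)
    (hM_ne : ∀ t, ∀ p ∈ M t, p.1 ≠ p.2)
    (hM_disj : ∀ t, ∀ p ∈ M t, ∀ q ∈ M t, p ≠ q →
      p.1 ≠ q.1 ∧ p.1 ≠ q.2 ∧ p.2 ≠ q.1 ∧ p.2 ≠ q.2)
    (hμ : ∀ t, ∀ p ∈ M t, μ t p ∈ Set.Ioc (0 : ℝ) (1 / 2))
    (hupd : ∀ t, ∀ p ∈ M t, ‖x t p.1 - x t p.2‖ ≤ ε →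
      x (t + 1) p.1 = x t p.1 + μ t p • (x t p.2 - x t p.1) ∧
      x (t + 1) p.2 = x t p.2 + μ t p • (x t p.1 - x t p.2))
    (hkeep : ∀ t (k : Fin n),
      (∀ p ∈ M t, (k = p.1 ∨ k = p.2) → ε < ‖x t p.1 - x t p.2‖) →
      x (t + 1) k = x t k) :
    ∀ t : ℕ,
      (∑ i, ∑ j, ‖x t i - x t j‖ ^ 2) - (∑ i, ∑ j, ‖x (t + 1) i - x (t + 1) j‖ ^ 2) ≥
        4 * ∑ i, ‖x t i - x (t + 1) i‖ ^ 2 := by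
  intro t
  set A := (M t).filter fun p => ‖x t p.1 - x t p.2‖ ≤ ε
  have hA : ∀ p ∈ A, p ∈ M t ∧ ‖x t p.1 - x t p.2‖ ≤ ε := fun p => mem_filter.1
  have hstep : IsPairAveragingStep A (μ t) (x t) (x (t + 1)) :=
    { ne := fun p hp => hM_ne t p (hA p hp).1
      pairwiseDisjoint := fun p hp q hq hpq => by
        obtain ⟨h₁, h₂, h₃, h₄⟩ := hM_disj t p (hA p hp).1 q (hA q hq).1 hpq
        simp only [Function.onFun, disjoint_insert_left, disjoint_singleton_left, mem_insert,
          mem_singleton]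
        tauto
      rate_mem := fun p hp => Set.Ioc_subset_Icc_self (hμ t p (hA p hp).1)
      move_fst := fun p hp => (hupd t p (hA p hp).1 (hA p hp).2).1
      move_snd := fun p hp => (hupd t p (hA p hp).1 (hA p hp).2).2
      fixed := fun k hk => hkeep t k fun p hp hkp => by
        by_contra hfar
        have hpA : p ∈ A := mem_filter.2 ⟨hp, not_lt.1 hfar⟩
        exact hkp.elim (hk p hpA).1 (hk p hpA).2 }
  exact hstep.four_mul_sum_norm_sub_sq_le

/-- **Supermartingale inequality for pair interaction (one step, `n` individuals).**
In the finite pair-interaction model with equal rates — at each time `t` a matching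
`M t` of pairwise disjoint pairs of distinct individuals is given together with rates
`μ t p ∈ (0, 1/2]`; a matched pair within distance `ε` approaches each other equally
at its rate, and every other individual keeps its opinion — the quantity
`Z_p(t) = Σ_{i,j} ‖x_i(t) − x_j(t)‖²` satisfies
`Z_p(t) − Z_p(t+1) ≥ 4 Σ_i ‖x_i(t) − x_i(t+1)‖²` for every `t`. -/
theorem pair_interaction_supermartingale (n d : ℕ) (hn : 1 ≤ n) (hd : 1 ≤ d)
    (ε : ℝ) (hε : 0 < ε)
    (x : ℕ → Fin n → EuclideanSpace ℝ (Fin d))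
    (M : ℕ → Finset (Fin n × Fin n)) (μ : ℕ → Fin n × Fin n → ℝ)
    (hM_ne : ∀ t, ∀ p ∈ M t, p.1 ≠ p.2)
    (hM_disj : ∀ t, ∀ p ∈ M t, ∀ q ∈ M t, p ≠ q →
      p.1 ≠ q.1 ∧ p.1 ≠ q.2 ∧ p.2 ≠ q.1 ∧ p.2 ≠ q.2)
    (hμ : ∀ t, ∀ p ∈ M t, μ t p ∈ Set.Ioc (0 : ℝ) (1 / 2))
    (hupd : ∀ t, ∀ p ∈ M t, ‖x t p.1 - x t p.2‖ ≤ ε →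
      x (t + 1) p.1 = x t p.1 + μ t p • (x t p.2 - x t p.1) ∧
      x (t + 1) p.2 = x t p.2 + μ t p • (x t p.1 - x t p.2))
    (hkeep : ∀ t (k : Fin n),
      (∀ p ∈ M t, (k = p.1 ∨ k = p.2) → ε < ‖x t p.1 - x t p.2‖) →
      x (t + 1) k = x t k) :
    ∀ t : ℕ,
      (∑ i, ∑ j, ‖x t i - x t j‖ ^ 2) - (∑ i, ∑ j, ‖x (t + 1) i - x (t + 1) j‖ ^ 2) ≥
        4 * ∑ i, ‖x t i - x (t + 1) i‖ ^ 2 :=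
  pair_interaction_supermartingale_general n d ε x M μ hM_ne hM_disj hμ hupd hkeep
end

section
/- Supermartingale inequality for group interaction (one step, n individuals): In the finite group-interaction model on a graph E over [n], define Z_g(t) = Σ_{i,j ∈ [n]} ( (‖x_i(t) − x_j(t)‖² ∧ ε²) ∨ ε²·1{(i,j) ∉ E} ), i.e. the summand is min(‖x_i(t) − x_j(t)‖², ε²) when (i,j) ∈ E and ε² when (i,j) ∉ E. Then for every t, Z_g(t) − Z_g(t+1) ≥ 4 Σ_{i ∈ [n]} ‖x_i(t) − x_i(t+1)‖². -/
/-!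
Write `N i` for the neighbourhood of `i`, `s i = ∑_{k ∈ N i} (x k - x i)` and `c i = (1 - α i) / #(N i)`,
so that the step is `x' i = x i + D i` with `D i = c i • s i`. On the pairs `j ∈ N i` the truncated
squared distances are the true ones at time `t` and can only be smaller at time `t + 1`, while on all
other pairs they are `ε²`, their maximum, at time `t`. So it suffices to bound
`∑_i ∑_{j ∈ N i} (‖x i - x j‖² - ‖x' i - x' j‖²)` from below. As `N` is symmetric, this sum equals
`4 ∑ c i ‖s i‖² - ∑_i ∑_{j ∈ N i} ‖D i - D j‖²`, and `‖D i - D j‖² ≤ 2 ‖D i‖² + 2 ‖D j‖²` bounds the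
second sum by `4 ∑ (#(N i) - 1) c i² ‖s i‖²`. What is left is `4 ∑ c i (1 - (#(N i) - 1) c i) ‖s i‖²`,
which is at least `4 ∑ c i² ‖s i‖² = 4 ∑ ‖x i - x' i‖²` because `#(N i) c i ≤ 1`.
-/

open scoped Classical

/-- The update neighborhood under group interaction on a simple graph `G` over `[n]`:
`N_i(t) = {j : j = i, or (i,j) ∈ E and ‖x_i(t) − x_j(t)‖ ≤ ε}`. -/
noncomputable def grpNbhd {n d : ℕ} (G : SimpleGraph (Fin n)) (ε : ℝ)
    (x : ℕ → Fin n → EuclideanSpace ℝ (Fin d)) (t : ℕ) (i : Fin n) : Finset (Fin n) :=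
  Finset.univ.filter fun j => j = i ∨ (G.Adj i j ∧ ‖x t i - x t j‖ ≤ ε)

open Finset
open scoped RealInnerProductSpace

section SymmetricNeighbourhoods

variable {ι E : Type*} [Fintype ι] [NormedAddCommGroup E] [InnerProductSpace ℝ E]
  {N : ι → Finset ι}

theorem sum_sum_swap_of_symm {M : Type*} [AddCommMonoid M] (hN : ∀ i j, j ∈ N i ↔ i ∈ N j)
    (f : ι → ι → M) : ∑ i, ∑ j ∈ N i, f i j = ∑ i, ∑ j ∈ N i, f j i :=
  sum_comm' fun i j => by simp [hN i j]

theorem sum_sum_inner_sub_sub (hN : ∀ i j, j ∈ N i ↔ i ∈ N j) (x D : ι → E) :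
    ∑ i, ∑ j ∈ N i, ⟪x i - x j, D i - D j⟫ = 2 * ∑ i, ⟪∑ j ∈ N i, (x i - x j), D i⟫ := by
  have hswap : ∑ i, ∑ j ∈ N i, ⟪x i - x j, D j⟫ = -∑ i, ∑ j ∈ N i, ⟪x i - x j, D i⟫ := by
    rw [sum_sum_swap_of_symm hN]
    simp only [← sum_neg_distrib, ← inner_neg_left, neg_sub]
  simp only [sum_inner]
  simp only [inner_sub_right, sum_sub_distrib, hswap]
  ring

theorem sum_sum_norm_sub_sq_le (hself : ∀ i, i ∈ N i) (hN : ∀ i j, j ∈ N i ↔ i ∈ N j)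
    (D : ι → E) :
    ∑ i, ∑ j ∈ N i, ‖D i - D j‖ ^ 2 ≤ 4 * ∑ i, ((#(N i) : ℝ) - 1) * ‖D i‖ ^ 2 := by
  set M := fun i => (N i).erase i
  have hM : ∀ i j, j ∈ M i ↔ i ∈ M j := fun i j => by
    simp only [M, mem_erase, hN i j, ne_comm]
  have hcard : ∀ i, (#(M i) : ℝ) = #(N i) - 1 := fun i => by
    rw [card_erase_of_mem (hself i), Nat.cast_pred (card_pos.2 ⟨i, hself i⟩)]
  calc ∑ i, ∑ j ∈ N i, ‖D i - D j‖ ^ 2 = ∑ i, ∑ j ∈ M i, ‖D i - D j‖ ^ 2 :=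
        sum_congr rfl fun i _ => (sum_erase _ (by simp)).symm
    _ ≤ ∑ i, ∑ j ∈ M i, (2 * ‖D i‖ ^ 2 + 2 * ‖D j‖ ^ 2) := by
        gcongr with i _ j _
        nlinarith [parallelogram_law_with_norm ℝ (D i) (D j), sq_nonneg ‖D i + D j‖]
    _ = 2 * ∑ i, ∑ j ∈ M i, ‖D i‖ ^ 2 + 2 * ∑ i, ∑ j ∈ M i, ‖D j‖ ^ 2 := by
        simp only [sum_add_distrib, mul_sum]
    _ = 4 * ∑ i, ((#(N i) : ℝ) - 1) * ‖D i‖ ^ 2 := by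
        rw [sum_sum_swap_of_symm hM fun _ j => ‖D j‖ ^ 2]
        simp only [sum_const, nsmul_eq_mul, hcard]
        ring

theorem four_mul_sum_norm_sub_sq_le (hself : ∀ i, i ∈ N i) (hN : ∀ i j, j ∈ N i ↔ i ∈ N j)
    {x x' : ι → E} {c : ι → ℝ} (hc0 : ∀ i, 0 ≤ c i) (hc1 : ∀ i, (#(N i) : ℝ) * c i ≤ 1)
    (hx' : ∀ i, x' i = x i + c i • ∑ k ∈ N i, (x k - x i)) :
    4 * ∑ i, ‖x i - x' i‖ ^ 2 ≤ ∑ i, ∑ j ∈ N i, (‖x i - x j‖ ^ 2 - ‖x' i - x' j‖ ^ 2) := by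
  set s := fun i => ∑ k ∈ N i, (x k - x i)
  set D := fun i => c i • s i
  have hnormD : ∀ i, ‖D i‖ ^ 2 = c i ^ 2 * ‖s i‖ ^ 2 := fun i => by
    simp only [D, norm_smul, Real.norm_of_nonneg (hc0 i), mul_pow]
  have hpair : ∀ i j, ‖x i - x j‖ ^ 2 - ‖x' i - x' j‖ ^ 2
      = -2 * ⟪x i - x j, D i - D j⟫ - ‖D i - D j‖ ^ 2 := fun i j => by
    rw [hx' i, hx' j, show x i + D i - (x j + D j) = x i - x j + (D i - D j) by abel,
      norm_add_sq_real]
    ring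
  have hsum : ∀ i, ∑ j ∈ N i, (x i - x j) = -s i := fun i => by
    simp only [s, ← sum_neg_distrib, neg_sub]
  have hdrift : ∑ i, ∑ j ∈ N i, ⟪x i - x j, D i - D j⟫ = -2 * ∑ i, c i * ‖s i‖ ^ 2 := by
    rw [sum_sum_inner_sub_sub hN, mul_sum, mul_sum]
    refine sum_congr rfl fun i _ => ?_
    simp only [hsum i, D, inner_neg_left, real_inner_smul_right, real_inner_self_eq_norm_sq]
    ring
  have hstep : ∀ i, ((#(N i) : ℝ) - 1) * ‖D i‖ ^ 2 + ‖D i‖ ^ 2 ≤ c i * ‖s i‖ ^ 2 := fun i => by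
    rw [hnormD]
    nlinarith [mul_nonneg (mul_nonneg (hc0 i) (sub_nonneg.2 (hc1 i))) (sq_nonneg ‖s i‖)]
  calc 4 * ∑ i, ‖x i - x' i‖ ^ 2 = 4 * ∑ i, ‖D i‖ ^ 2 := by
        simp only [hx', sub_add_cancel_left, norm_neg, D, s]
    _ ≤ 4 * ∑ i, c i * ‖s i‖ ^ 2 - 4 * ∑ i, ((#(N i) : ℝ) - 1) * ‖D i‖ ^ 2 := by
        have := sum_le_sum fun i (_ : i ∈ univ) => hstep i
        rw [sum_add_distrib] at this
        linarith
    _ ≤ 4 * ∑ i, c i * ‖s i‖ ^ 2 - ∑ i, ∑ j ∈ N i, ‖D i - D j‖ ^ 2 := by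
        linarith [sum_sum_norm_sub_sq_le hself hN D]
    _ = ∑ i, ∑ j ∈ N i, (‖x i - x j‖ ^ 2 - ‖x' i - x' j‖ ^ 2) := by
        simp only [hpair, sum_sub_distrib, ← mul_sum, hdrift]
        ring

end SymmetricNeighbourhoods

theorem smul_add_div_card_smul_sum_eq {ι E : Type*} [AddCommGroup E] [Module ℝ E] {s : Finset ι}
    (hs : s.Nonempty) (a : ℝ) (y : ι → E) (i : ι) :
    a • y i + ((1 - a) / #s) • ∑ k ∈ s, y k = y i + ((1 - a) / #s) • ∑ k ∈ s, (y k - y i) := by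
  have hcard : (#s : ℝ) ≠ 0 := by exact_mod_cast hs.card_pos.ne'
  rw [sum_sub_distrib, sum_const, ← Nat.cast_smul_eq_nsmul ℝ, smul_sub, smul_smul,
    div_mul_cancel₀ _ hcard]
  module

section TruncatedPotential

variable {ι E : Type*} [NormedAddCommGroup E] {G : SimpleGraph ι} {ε : ℝ} {y : ι → E} {i j : ι}

/-- The summand of `Z_g`. -/
noncomputable def truncSqDist (G : SimpleGraph ι) (ε : ℝ) (y : ι → E) (i j : ι) : ℝ :=
  min (‖y i - y j‖ ^ 2) (ε ^ 2) ⊔ (if G.Adj i j then 0 else ε ^ 2)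

theorem truncSqDist_le : truncSqDist G ε y i j ≤ ε ^ 2 :=
  sup_le (min_le_right _ _) (by split_ifs; exacts [sq_nonneg ε, le_rfl])

theorem truncSqDist_self : truncSqDist G ε y i i = ε ^ 2 := by
  simp [truncSqDist]

theorem truncSqDist_of_not_adj (h : ¬G.Adj i j) : truncSqDist G ε y i j = ε ^ 2 := by
  simp [truncSqDist, h]

theorem truncSqDist_le_norm_sq (h : G.Adj i j) : truncSqDist G ε y i j ≤ ‖y i - y j‖ ^ 2 := by
  simp only [truncSqDist, h, if_true]
  exact sup_le (min_le_left _ _) (by positivity)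

theorem truncSqDist_of_adj_of_norm_le (h : G.Adj i j) (hle : ‖y i - y j‖ ≤ ε) :
    truncSqDist G ε y i j = ‖y i - y j‖ ^ 2 := by
  have : ‖y i - y j‖ ^ 2 ≤ ε ^ 2 := pow_le_pow_left₀ (norm_nonneg _) hle 2
  simp only [truncSqDist, h, if_true, min_eq_left this]
  exact max_eq_left (by positivity)

theorem truncSqDist_of_adj_of_le_norm (h : G.Adj i j) (hε : 0 ≤ ε) (hle : ε ≤ ‖y i - y j‖) :
    truncSqDist G ε y i j = ε ^ 2 := by
  have : ε ^ 2 ≤ ‖y i - y j‖ ^ 2 := pow_le_pow_left₀ hε hle 2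
  simp only [truncSqDist, h, if_true, min_eq_right this]
  exact max_eq_left (by positivity)

end TruncatedPotential

section GroupInteraction

variable {n d : ℕ} {G : SimpleGraph (Fin n)} {ε : ℝ} {x : ℕ → Fin n → EuclideanSpace ℝ (Fin d)}
  {t : ℕ} {i j : Fin n}

theorem mem_grpNbhd : j ∈ grpNbhd G ε x t i ↔ j = i ∨ (G.Adj i j ∧ ‖x t i - x t j‖ ≤ ε) := by
  simp [grpNbhd]

theorem mem_grpNbhd_self : i ∈ grpNbhd G ε x t i :=
  mem_grpNbhd.2 (Or.inl rfl)

theorem mem_grpNbhd_comm : j ∈ grpNbhd G ε x t i ↔ i ∈ grpNbhd G ε x t j := by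
  simp only [mem_grpNbhd, eq_comm (a := j), G.adj_comm i j, norm_sub_rev (x t i)]

theorem ite_mem_grpNbhd_le_truncSqDist_sub (hε : 0 ≤ ε) (y : Fin n → EuclideanSpace ℝ (Fin d)) :
    (if j ∈ grpNbhd G ε x t i then ‖x t i - x t j‖ ^ 2 - ‖y i - y j‖ ^ 2 else 0) ≤
      truncSqDist G ε (x t) i j - truncSqDist G ε y i j := by
  split_ifs with hj
  · rcases mem_grpNbhd.1 hj with rfl | ⟨hadj, hle⟩
    · simp [truncSqDist_self]
    · rw [truncSqDist_of_adj_of_norm_le hadj hle]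
      linarith [truncSqDist_le_norm_sq (ε := ε) (y := y) hadj]
  · have : truncSqDist G ε (x t) i j = ε ^ 2 := by
      by_cases hadj : G.Adj i j
      · exact truncSqDist_of_adj_of_le_norm hadj hε
          (le_of_not_ge fun hle => hj (mem_grpNbhd.2 (Or.inr ⟨hadj, hle⟩)))
      · exact truncSqDist_of_not_adj hadj
    linarith [truncSqDist_le (G := G) (ε := ε) (y := y) (i := i) (j := j)]

theorem sum_sum_grpNbhd_le_truncSqDist_sub (hε : 0 ≤ ε) (y : Fin n → EuclideanSpace ℝ (Fin d)) :
    ∑ i, ∑ j ∈ grpNbhd G ε x t i, (‖x t i - x t j‖ ^ 2 - ‖y i - y j‖ ^ 2) ≤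
      ∑ i, ∑ j, truncSqDist G ε (x t) i j - ∑ i, ∑ j, truncSqDist G ε y i j := by
  rw [← sum_sub_distrib]
  gcongr with i
  rw [← sum_sub_distrib, ← sum_ite_mem_eq]
  gcongr with j
  exact ite_mem_grpNbhd_le_truncSqDist_sub hε y

end GroupInteraction

theorem group_interaction_supermartingale_general (n d : ℕ)
    (ε : ℝ) (hε : 0 < ε)
    (G : SimpleGraph (Fin n))
    (x : ℕ → Fin n → EuclideanSpace ℝ (Fin d)) (α : ℕ → Fin n → ℝ)
    (hα : ∀ t i, α t i ∈ Set.Icc (0 : ℝ) 1)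
    (hdyn : ∀ t i, x (t + 1) i =
      α t i • x t i + ((1 - α t i) / ((grpNbhd G ε x t i).card : ℝ)) •
        ∑ k ∈ grpNbhd G ε x t i, x t k) :
    ∀ t : ℕ,
      (∑ i, ∑ j, (min (‖x t i - x t j‖ ^ 2) (ε ^ 2)) ⊔
          (if G.Adj i j then 0 else ε ^ 2)) -
        (∑ i, ∑ j, (min (‖x (t + 1) i - x (t + 1) j‖ ^ 2) (ε ^ 2)) ⊔
          (if G.Adj i j then 0 else ε ^ 2)) ≥
      4 * ∑ i, ‖x t i - x (t + 1) i‖ ^ 2 := by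
  intro t
  have hcard : ∀ i, (0 : ℝ) < #(grpNbhd G ε x t i) := fun i => by
    exact_mod_cast card_pos.2 ⟨i, mem_grpNbhd_self⟩
  have hstep := four_mul_sum_norm_sub_sq_le (N := grpNbhd G ε x t)
    (fun _ => mem_grpNbhd_self) (fun _ _ => mem_grpNbhd_comm)
    (c := fun i => (1 - α t i) / #(grpNbhd G ε x t i))
    (fun i => div_nonneg (sub_nonneg.2 (hα t i).2) (hcard i).le)
    (fun i => by rw [mul_div_cancel₀ _ (hcard i).ne']; linarith [(hα t i).1])
    (fun i => (hdyn t i).trans (smul_add_div_card_smul_sum_eq ⟨i, mem_grpNbhd_self⟩ _ _ _))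
  exact hstep.trans (sum_sum_grpNbhd_le_truncSqDist_sub hε.le (x (t + 1)))

/-- **Supermartingale inequality for group interaction (one step, `n` individuals).**
In the finite group-interaction model on a graph `E` over `[n]`, the quantity
`Z_g(t) = Σ_{i,j} ((‖x_i(t) − x_j(t)‖² ∧ ε²) ∨ ε²·1{(i,j) ∉ E})` satisfies
`Z_g(t) − Z_g(t+1) ≥ 4 Σ_i ‖x_i(t) − x_i(t+1)‖²` for every `t`. -/
theorem group_interaction_supermartingale (n d : ℕ) (hn : 1 ≤ n) (hd : 1 ≤ d)
    (ε : ℝ) (hε : 0 < ε)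
    (G : SimpleGraph (Fin n))
    (x : ℕ → Fin n → EuclideanSpace ℝ (Fin d)) (α : ℕ → Fin n → ℝ)
    (hα : ∀ t i, α t i ∈ Set.Icc (0 : ℝ) 1)
    (hdyn : ∀ t i, x (t + 1) i =
      α t i • x t i + ((1 - α t i) / ((grpNbhd G ε x t i).card : ℝ)) •
        ∑ k ∈ grpNbhd G ε x t i, x t k) :
    ∀ t : ℕ,
      (∑ i, ∑ j, (min (‖x t i - x t j‖ ^ 2) (ε ^ 2)) ⊔
          (if G.Adj i j then 0 else ε ^ 2)) -
        (∑ i, ∑ j, (min (‖x (t + 1) i - x (t + 1) j‖ ^ 2) (ε ^ 2)) ⊔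
          (if G.Adj i j then 0 else ε ^ 2)) ≥
      4 * ∑ i, ‖x t i - x (t + 1) i‖ ^ 2 :=
  group_interaction_supermartingale_general n d ε hε G x α hα hdyn
end

section
/- Square-summability and vanishing increments for pair interaction (n individuals): In the finite pair-interaction model with equal rates, with Z_p(0) = Σ_{i,j ∈ [n]} ‖x_i(0) − x_j(0)‖², one has Σ_{t=0}^{∞} Σ_{i ∈ [n]} ‖x_i(t) − x_i(t+1)‖² ≤ Z_p(0)/4; in particular x_i(t) − x_i(t+1) → 0 as t → ∞ for every i ∈ [n]. -/
open RealInnerProductSpace Finset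

section aux
variable {E : Type*} [NormedAddCommGroup E] [InnerProductSpace ℝ E]

lemma pair_aux_g1 (u v : E) (c : ℝ) :
    (u + c • (v - u) - u) + (v + c • (u - v) - v) = 0 := by
  simp only [smul_sub]; abel

lemma pair_aux_g3 (u v : E) (c : ℝ) (hc : 0 ≤ c) :
    ‖u - (u + c • (v - u))‖ ^ 2 + ‖v - (v + c • (u - v))‖ ^ 2
      = 2 * c ^ 2 * ‖u - v‖ ^ 2 := by
  have h1 : u - (u + c • (v - u)) = c • (u - v) := by
    rw [smul_sub, smul_sub]; abel
  have h2 : v - (v + c • (u - v)) = c • (v - u) := by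
    rw [smul_sub, smul_sub]; abel
  rw [h1, h2, norm_smul, norm_smul, Real.norm_eq_abs, abs_of_nonneg hc,
    norm_sub_rev v u]
  ring

lemma pair_aux_g2 (u v : E) (c : ℝ) :
    (‖u‖ ^ 2 - ‖u + c • (v - u)‖ ^ 2) + (‖v‖ ^ 2 - ‖v + c • (u - v)‖ ^ 2)
      = 2 * c * (1 - c) * ‖u - v‖ ^ 2 := by
  have e : ∀ w : E, ‖w‖ ^ 2 = ⟪w, w⟫ := fun w => (real_inner_self_eq_norm_sq w).symm
  simp only [e, inner_add_left, inner_add_right, inner_sub_left, inner_sub_right,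
    real_inner_smul_left, real_inner_smul_right]
  rw [real_inner_comm v u]
  ring

lemma sum_touched {n : ℕ} {β : Type*} [AddCommMonoid β] (A : Finset (Fin n × Fin n))
    (hne : ∀ p ∈ A, p.1 ≠ p.2)
    (hdisj : ∀ p ∈ A, ∀ q ∈ A, p ≠ q →
      p.1 ≠ q.1 ∧ p.1 ≠ q.2 ∧ p.2 ≠ q.1 ∧ p.2 ≠ q.2)
    (g : Fin n → β)
    (hg : ∀ k : Fin n, (∀ p ∈ A, k ≠ p.1 ∧ k ≠ p.2) → g k = 0) :
    ∑ k, g k = ∑ p ∈ A, (g p.1 + g p.2) := by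
  have hsub : ∑ k, g k = ∑ k ∈ A.biUnion (fun p => ({p.1, p.2} : Finset (Fin n))), g k := by
    refine (Finset.sum_subset (Finset.subset_univ _) ?_).symm
    intro k _ hk
    refine hg k fun p hp => ?_
    simp only [Finset.mem_biUnion, not_exists, not_and] at hk
    have := hk p hp
    simp only [Finset.mem_insert, Finset.mem_singleton, not_or] at this
    exact ⟨this.1, this.2⟩
  rw [hsub, Finset.sum_biUnion]
  · exact Finset.sum_congr rfl fun p hp => Finset.sum_pair (hne p hp)
  · intro p hp q hq hpq
    obtain ⟨h1, h2, h3, h4⟩ := hdisj p hp q hq hpq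
    simp only [Finset.disjoint_left, Finset.mem_insert, Finset.mem_singleton]
    rintro a ha hb
    rcases ha with rfl | rfl <;> rcases hb with h | h <;>
      first
        | exact h1 h | exact h2 h | exact h3 h | exact h4 h

lemma sq_sum_identity {n : ℕ} (a : Fin n → E) :
    ∑ i, ∑ j, ‖a i - a j‖ ^ 2
      = 2 * n * (∑ i, ‖a i‖ ^ 2) - 2 * ‖∑ i, a i‖ ^ 2 := by
  have e : ∀ i j : Fin n, ‖a i - a j‖ ^ 2 = ‖a i‖ ^ 2 - 2 * ⟪a i, a j⟫ + ‖a j‖ ^ 2 :=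
    fun i j => norm_sub_sq_real _ _
  simp only [e, Finset.sum_add_distrib, Finset.sum_sub_distrib, Finset.sum_const,
    Finset.card_univ, Fintype.card_fin, nsmul_eq_mul, ← Finset.mul_sum, ← inner_sum,
    ← sum_inner, real_inner_self_eq_norm_sq]
  ring
end aux

/-- **Square-summability and vanishing increments for pair interaction
(`n` individuals).** In the finite pair-interaction model with equal rates, with
`Z_p(0) = Σ_{i,j} ‖x_i(0) − x_j(0)‖²`, one has
`Σ_{t=0}^∞ Σ_i ‖x_i(t) − x_i(t+1)‖² ≤ Z_p(0)/4`; in particular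
`x_i(t) − x_i(t+1) → 0` as `t → ∞` for every `i`. -/
theorem pair_interaction_increments_vanish (n d : ℕ) (hn : 1 ≤ n) (hd : 1 ≤ d)
    (ε : ℝ) (hε : 0 < ε)
    (x : ℕ → Fin n → EuclideanSpace ℝ (Fin d))
    (M : ℕ → Finset (Fin n × Fin n)) (μ : ℕ → Fin n × Fin n → ℝ)
    (hM_ne : ∀ t, ∀ p ∈ M t, p.1 ≠ p.2)
    (hM_disj : ∀ t, ∀ p ∈ M t, ∀ q ∈ M t, p ≠ q →
      p.1 ≠ q.1 ∧ p.1 ≠ q.2 ∧ p.2 ≠ q.1 ∧ p.2 ≠ q.2)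
    (hμ : ∀ t, ∀ p ∈ M t, μ t p ∈ Set.Ioc (0 : ℝ) (1 / 2))
    (hupd : ∀ t, ∀ p ∈ M t, ‖x t p.1 - x t p.2‖ ≤ ε →
      x (t + 1) p.1 = x t p.1 + μ t p • (x t p.2 - x t p.1) ∧
      x (t + 1) p.2 = x t p.2 + μ t p • (x t p.1 - x t p.2))
    (hkeep : ∀ t (k : Fin n),
      (∀ p ∈ M t, (k = p.1 ∨ k = p.2) → ε < ‖x t p.1 - x t p.2‖) →
      x (t + 1) k = x t k) :
    Summable (fun t : ℕ => ∑ i, ‖x t i - x (t + 1) i‖ ^ 2) ∧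
    (∑' t : ℕ, ∑ i, ‖x t i - x (t + 1) i‖ ^ 2) ≤
      (∑ i, ∑ j, ‖x 0 i - x 0 j‖ ^ 2) / 4 ∧
    (∀ i, Filter.Tendsto (fun t => x t i - x (t + 1) i) Filter.atTop (nhds 0)) := by
  classical
  -- key per-step facts
  have key : ∀ t : ℕ, (∑ i, x (t + 1) i = ∑ i, x t i) ∧
      4 * (∑ i, ‖x t i - x (t + 1) i‖ ^ 2) ≤
        2 * n * ((∑ i, ‖x t i‖ ^ 2) - ∑ i, ‖x (t + 1) i‖ ^ 2) := by
    intro t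
    set A : Finset (Fin n × Fin n) :=
      (M t).filter (fun p => ‖x t p.1 - x t p.2‖ ≤ ε) with hA
    have hAsub : ∀ p ∈ A, p ∈ M t := fun p hp => (Finset.mem_filter.mp hp).1
    have hAne : ∀ p ∈ A, p.1 ≠ p.2 := fun p hp => hM_ne t p (hAsub p hp)
    have hAdisj : ∀ p ∈ A, ∀ q ∈ A, p ≠ q →
        p.1 ≠ q.1 ∧ p.1 ≠ q.2 ∧ p.2 ≠ q.1 ∧ p.2 ≠ q.2 :=
      fun p hp q hq hpq => hM_disj t p (hAsub p hp) q (hAsub q hq) hpq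
    have hAupd : ∀ p ∈ A,
        x (t + 1) p.1 = x t p.1 + μ t p • (x t p.2 - x t p.1) ∧
        x (t + 1) p.2 = x t p.2 + μ t p • (x t p.1 - x t p.2) :=
      fun p hp => hupd t p (hAsub p hp) (Finset.mem_filter.mp hp).2
    have hAkeep : ∀ k : Fin n, (∀ p ∈ A, k ≠ p.1 ∧ k ≠ p.2) →
        x (t + 1) k = x t k := by
      intro k hk
      apply hkeep t k
      intro p hpM hkp
      by_contra hle
      push_neg at hle
      have hpA : p ∈ A := Finset.mem_filter.mpr ⟨hpM, hle⟩
      rcases hkp with rfl | rfl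
      · exact (hk p hpA).1 rfl
      · exact (hk p hpA).2 rfl
    -- sum preservation
    have h1 : ∑ i, (x (t + 1) i - x t i) = 0 := by
      rw [sum_touched A hAne hAdisj _
        (fun k hk => by rw [hAkeep k hk, sub_self])]
      refine Finset.sum_eq_zero fun p hp => ?_
      obtain ⟨e1, e2⟩ := hAupd p hp
      rw [e1, e2]
      exact pair_aux_g1 _ _ _
    have hS : ∑ i, x (t + 1) i = ∑ i, x t i := by
      rw [Finset.sum_sub_distrib, sub_eq_zero] at h1
      exact h1
    -- energy drop
    have h2 : (∑ i, ‖x t i‖ ^ 2) - (∑ i, ‖x (t + 1) i‖ ^ 2) =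
        ∑ p ∈ A, 2 * μ t p * (1 - μ t p) * ‖x t p.1 - x t p.2‖ ^ 2 := by
      rw [← Finset.sum_sub_distrib,
        sum_touched A hAne hAdisj (fun k => ‖x t k‖ ^ 2 - ‖x (t + 1) k‖ ^ 2)
          (fun k hk => by
            show ‖x t k‖ ^ 2 - ‖x (t + 1) k‖ ^ 2 = 0
            rw [hAkeep k hk, sub_self])]
      refine Finset.sum_congr rfl fun p hp => ?_
      obtain ⟨e1, e2⟩ := hAupd p hp
      rw [e1, e2]
      exact pair_aux_g2 _ _ _
    -- increments
    have h3 : (∑ i, ‖x t i - x (t + 1) i‖ ^ 2) =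
        ∑ p ∈ A, 2 * (μ t p) ^ 2 * ‖x t p.1 - x t p.2‖ ^ 2 := by
      rw [sum_touched A hAne hAdisj (fun k => ‖x t k - x (t + 1) k‖ ^ 2)
        (fun k hk => by
          show ‖x t k - x (t + 1) k‖ ^ 2 = 0
          rw [hAkeep k hk, sub_self]
          simp)]
      refine Finset.sum_congr rfl fun p hp => ?_
      obtain ⟨e1, e2⟩ := hAupd p hp
      rw [e1, e2]
      exact pair_aux_g3 _ _ _ (hμ t p (hAsub p hp)).1.le
    refine ⟨hS, ?_⟩
    rw [h2, h3, Finset.mul_sum, Finset.mul_sum]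
    refine Finset.sum_le_sum fun p hp => ?_
    have hn2 : (2 : ℝ) ≤ n := by
      have h := hAne p hp
      have hv : p.1.val ≠ p.2.val := fun hh => h (Fin.ext hh)
      have h1 := p.1.isLt
      have h2 := p.2.isLt
      exact_mod_cast (by omega : 2 ≤ n)
    obtain ⟨hμ0, hμ2⟩ := hμ t p (hAsub p hp)
    have hD : (0 : ℝ) ≤ ‖x t p.1 - x t p.2‖ ^ 2 := by positivity
    have hkey : 0 ≤ (n : ℝ) * (1 - μ t p) - 2 * μ t p := by nlinarith
    nlinarith [mul_nonneg (mul_nonneg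
      (by positivity : (0:ℝ) ≤ 4 * μ t p) hD) hkey]
  -- telescoping with the pairwise energy Z
  have hZid : ∀ t : ℕ, (∑ i, ∑ j, ‖x t i - x t j‖ ^ 2) =
      2 * n * (∑ i, ‖x t i‖ ^ 2) - 2 * ‖∑ i, x t i‖ ^ 2 := by
    intro t
    simpa using sq_sum_identity (fun i : Fin n => x t i)
  have hstep : ∀ t : ℕ, 4 * (∑ i, ‖x t i - x (t + 1) i‖ ^ 2) ≤
      (∑ i, ∑ j, ‖x t i - x t j‖ ^ 2) - ∑ i, ∑ j, ‖x (t+1) i - x (t+1) j‖ ^ 2 := by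
    intro t
    rw [hZid t, hZid (t + 1), (key t).1]
    linarith [(key t).2]
  have hZ0 : ∀ t : ℕ, 0 ≤ ∑ i, ∑ j, ‖x t i - x t j‖ ^ 2 := by
    intro t
    positivity
  have hnonneg : ∀ t : ℕ, 0 ≤ ∑ i, ‖x t i - x (t + 1) i‖ ^ 2 := by
    intro t
    positivity
  have hpart : ∀ N : ℕ, ∑ t ∈ Finset.range N, (∑ i, ‖x t i - x (t + 1) i‖ ^ 2) ≤
      (∑ i, ∑ j, ‖x 0 i - x 0 j‖ ^ 2) / 4 := by
    intro N
    have h1 : ∑ t ∈ Finset.range N, 4 * (∑ i, ‖x t i - x (t + 1) i‖ ^ 2) ≤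
        ∑ t ∈ Finset.range N, ((∑ i, ∑ j, ‖x t i - x t j‖ ^ 2) -
          ∑ i, ∑ j, ‖x (t+1) i - x (t+1) j‖ ^ 2) :=
      Finset.sum_le_sum fun t _ => hstep t
    rw [Finset.sum_range_sub' (fun t => ∑ i, ∑ j, ‖x t i - x t j‖ ^ 2) N,
      ← Finset.mul_sum] at h1
    have h2 := hZ0 N
    linarith
  have hsum : Summable (fun t : ℕ => ∑ i, ‖x t i - x (t + 1) i‖ ^ 2) :=
    summable_of_sum_range_le hnonneg hpart
  refine ⟨hsum, Summable.tsum_le_of_sum_range_le hsum hpart, ?_⟩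
  intro i
  have hzero : Filter.Tendsto (fun t : ℕ => ∑ i, ‖x t i - x (t + 1) i‖ ^ 2)
      Filter.atTop (nhds 0) := hsum.tendsto_atTop_zero
  have h1 : Filter.Tendsto (fun t : ℕ => ‖x t i - x (t + 1) i‖ ^ 2)
      Filter.atTop (nhds 0) := by
    refine squeeze_zero (fun t => by positivity) (fun t => ?_) hzero
    exact Finset.single_le_sum (f := fun j : Fin n => ‖x t j - x (t + 1) j‖ ^ 2)
      (fun j _ => by positivity) (Finset.mem_univ i)
  have h2 : Filter.Tendsto (fun t : ℕ => ‖x t i - x (t + 1) i‖)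
      Filter.atTop (nhds 0) := by
    have h3 := (Real.continuous_sqrt.tendsto 0).comp h1
    simp only [Real.sqrt_zero] at h3
    convert h3 using 2 with t
    exact (Real.sqrt_sq (norm_nonneg _)).symm
  exact tendsto_zero_iff_norm_tendsto_zero.mpr h2
end

section
/- Square-summability and vanishing increments for group interaction (n individuals): In the finite group-interaction model on a graph E over [n], with Z_g(0) = Σ_{i,j ∈ [n]} ( (‖x_i(0) − x_j(0)‖² ∧ ε²) ∨ ε²·1{(i,j) ∉ E} ), one has Σ_{t=0}^{∞} Σ_{i ∈ [n]} ‖x_i(t) − x_i(t+1)‖² ≤ Z_g(0)/4; in particular x_i(t) − x_i(t+1) → 0 as t → ∞ for every i ∈ [n]. -/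
open scoped Classical

/-!
The truncated energy `groupEnergy G ε x = Σ_{i,j} pairEnergy G ε x i j` (the `Z_g` of the
statement) is a Lyapunov function: one step lowers it by at least `4 Σ_i ‖x_i(t) - x_i(t+1)‖²`,
and telescoping bounds the series by `Z_g(0) / 4`.

For the decrease, let `H` be the graph of pairs that are adjacent and within `ε` at time `t`.
A pair adjacent in `H` contributes exactly `‖x_i - x_j‖²` before the step and at most
`‖y_i - y_j‖²` after it; every other pair contributes `ε²` before and at most `ε²` after.
On `H` the step is `Δ_i = β_i Σ_{j ∼ i} (x_j - x_i)` with `β_i (deg i + 1) = 1 - α_i ≤ 1`.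
Expanding `‖(x_i - x_j) + (Δ_i - Δ_j)‖²` over the edges, the cross terms sum to
`-4 Σ_i ⟪Σ_{j∼i} (x_j - x_i), Δ_i⟫ ≤ -4 Σ_i (deg i + 1) ‖Δ_i‖²`, while
`Σ_{edges} ‖Δ_i - Δ_j‖² ≤ 4 Σ_i deg i ‖Δ_i‖²`; the degrees cancel.
-/

open Finset
open scoped RealInnerProductSpace

section Averaging

variable {ι K M : Type*} [DecidableEq ι] [Field K] [CharZero K] [AddCommGroup M] [Module K M]

theorem smul_add_div_card_smul_sum_insert {s : Finset ι} {i : ι} (hi : i ∉ s) (a : K)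
    (v : ι → M) :
    a • v i + ((1 - a) / #(insert i s)) • ∑ k ∈ insert i s, v k =
      v i + ((1 - a) / (#s + 1)) • ∑ j ∈ s, (v j - v i) := by
  rw [card_insert_of_notMem hi, sum_insert hi, sum_sub_distrib, sum_const, Nat.cast_succ]
  have hb : (1 - a) / (#s + 1) * (#s + 1) = 1 - a := div_mul_cancel₀ _ (Nat.cast_add_one_ne_zero _)
  linear_combination (norm := module) hb • v i

end Averaging

theorem summable_and_tsum_le_of_le_sub {f Z : ℕ → ℝ} (hf : ∀ t, 0 ≤ f t) (hZ : ∀ t, 0 ≤ Z t)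
    (h : ∀ t, f t ≤ Z t - Z (t + 1)) : Summable f ∧ ∑' t, f t ≤ Z 0 := by
  have hpartial : ∀ T, ∑ t ∈ range T, f t ≤ Z 0 := fun T =>
    calc ∑ t ∈ range T, f t ≤ ∑ t ∈ range T, (Z t - Z (t + 1)) := sum_le_sum fun t _ => h t
      _ = Z 0 - Z T := sum_range_sub' Z T
      _ ≤ Z 0 := sub_le_self _ (hZ T)
  have hsum := summable_of_sum_range_le hf hpartial
  exact ⟨hsum, hsum.tsum_le_of_sum_range_le hpartial⟩

theorem tendsto_zero_of_summable_norm_sq {E : Type*} [SeminormedAddCommGroup E] {f : ℕ → E}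
    (h : Summable fun t => ‖f t‖ ^ 2) : Filter.Tendsto f Filter.atTop (nhds 0) := by
  rw [tendsto_zero_iff_norm_tendsto_zero]
  simpa [Real.sqrt_sq (norm_nonneg _)] using h.tendsto_atTop_zero.sqrt

namespace SimpleGraph

variable {V : Type*} [Fintype V] (H : SimpleGraph V) [DecidableRel H.Adj]

theorem sum_sum_neighborFinset_comm {M : Type*} [AddCommMonoid M] (f : V → V → M) :
    ∑ i, ∑ j ∈ H.neighborFinset i, f i j = ∑ i, ∑ j ∈ H.neighborFinset i, f j i :=
  sum_comm' fun i j => by simp [H.adj_comm]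

variable {E : Type*} [NormedAddCommGroup E] [InnerProductSpace ℝ E]

theorem sum_sum_neighborFinset_inner_sub_sub (x Δ : V → E) :
    ∑ i, ∑ j ∈ H.neighborFinset i, ⟪x i - x j, Δ i - Δ j⟫ =
      2 * ∑ i, ∑ j ∈ H.neighborFinset i, ⟪x i - x j, Δ i⟫ := by
  have hswap := H.sum_sum_neighborFinset_comm fun i j => ⟪x i - x j, Δ j⟫
  have hanti : ∀ i j, ⟪x j - x i, Δ i⟫ = -⟪x i - x j, Δ i⟫ := fun i j => by
    rw [← inner_neg_left, neg_sub]
  simp_rw [inner_sub_right, sum_sub_distrib, hswap, hanti, sum_neg_distrib]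
  ring

theorem sum_sum_neighborFinset_norm_sub_sq_le (Δ : V → E) :
    ∑ i, ∑ j ∈ H.neighborFinset i, ‖Δ i - Δ j‖ ^ 2 ≤ 4 * ∑ i, H.degree i * ‖Δ i‖ ^ 2 := by
  have hswap := H.sum_sum_neighborFinset_comm fun i j => ‖Δ j‖ ^ 2
  calc ∑ i, ∑ j ∈ H.neighborFinset i, ‖Δ i - Δ j‖ ^ 2
      ≤ ∑ i, ∑ j ∈ H.neighborFinset i, 2 * (‖Δ i‖ ^ 2 + ‖Δ j‖ ^ 2) := by
        gcongr with i _ j _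
        linarith [parallelogram_law_with_norm ℝ (Δ i) (Δ j), sq_nonneg ‖Δ i + Δ j‖]
    _ = 4 * ∑ i, H.degree i * ‖Δ i‖ ^ 2 := by
        simp_rw [mul_add, sum_add_distrib, ← mul_sum, hswap, sum_const,
          card_neighborFinset_eq_degree, nsmul_eq_mul]
        ring

theorem four_mul_sum_norm_sq_le_of_averaging {x y : V → E} {β : V → ℝ}
    (hβ_nonneg : ∀ i, 0 ≤ β i) (hβ_le : ∀ i, β i * (H.degree i + 1) ≤ 1)
    (hy : ∀ i, y i = x i + β i • ∑ j ∈ H.neighborFinset i, (x j - x i)) :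
    4 * ∑ i, ‖y i - x i‖ ^ 2 ≤
      ∑ i, ∑ j ∈ H.neighborFinset i, (‖x i - x j‖ ^ 2 - ‖y i - y j‖ ^ 2) := by
  set Δ := fun i => y i - x i
  have hpair : ∀ i j, ‖x i - x j‖ ^ 2 - ‖y i - y j‖ ^ 2 =
      -2 * ⟪x i - x j, Δ i - Δ j⟫ - ‖Δ i - Δ j‖ ^ 2 := fun i j => by
    rw [show y i - y j = (x i - x j) + (Δ i - Δ j) by simp only [Δ]; abel, norm_add_sq_real]
    ring
  have hdrift : ∀ i, (H.degree i + 1) * ‖Δ i‖ ^ 2 ≤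
      -∑ j ∈ H.neighborFinset i, ⟪x i - x j, Δ i⟫ := fun i => by
    rw [← sum_inner, ← inner_neg_left, ← sum_neg_distrib]
    simp_rw [neg_sub]
    set w := ∑ j ∈ H.neighborFinset i, (x j - x i)
    have hΔ : Δ i = β i • w := by simp only [Δ, hy]; abel
    rw [hΔ, real_inner_smul_right, real_inner_self_eq_norm_sq, norm_smul, Real.norm_eq_abs,
      abs_of_nonneg (hβ_nonneg i)]
    linear_combination
      mul_nonneg (mul_nonneg (hβ_nonneg i) (sq_nonneg ‖w‖)) (sub_nonneg.2 (hβ_le i))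
  calc 4 * ∑ i, ‖Δ i‖ ^ 2
      = 4 * ∑ i, (H.degree i + 1) * ‖Δ i‖ ^ 2 - 4 * ∑ i, H.degree i * ‖Δ i‖ ^ 2 := by
        simp_rw [add_mul, one_mul, sum_add_distrib]; ring
    _ ≤ -4 * ∑ i, ∑ j ∈ H.neighborFinset i, ⟪x i - x j, Δ i⟫ -
          ∑ i, ∑ j ∈ H.neighborFinset i, ‖Δ i - Δ j‖ ^ 2 := by
        have := sum_le_sum fun i (_ : i ∈ univ) => hdrift i
        rw [sum_neg_distrib] at this
        linarith [H.sum_sum_neighborFinset_norm_sub_sq_le Δ]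
    _ = ∑ i, ∑ j ∈ H.neighborFinset i, (‖x i - x j‖ ^ 2 - ‖y i - y j‖ ^ 2) := by
        simp_rw [hpair, sum_sub_distrib, ← mul_sum, H.sum_sum_neighborFinset_inner_sub_sub]
        ring

end SimpleGraph

section Energy

variable {V E : Type*} [SeminormedAddCommGroup E]

def confidenceGraph (G : SimpleGraph V) (ε : ℝ) (x : V → E) : SimpleGraph V where
  Adj i j := G.Adj i j ∧ ‖x i - x j‖ ≤ ε
  symm := ⟨fun _ _ h => ⟨h.1.symm, by rw [norm_sub_rev]; exact h.2⟩⟩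
  loopless := ⟨fun _ h => G.loopless.irrefl _ h.1⟩

@[simp]
theorem confidenceGraph_adj {G : SimpleGraph V} {ε : ℝ} {x : V → E} {i j : V} :
    (confidenceGraph G ε x).Adj i j ↔ G.Adj i j ∧ ‖x i - x j‖ ≤ ε :=
  Iff.rfl

noncomputable def pairEnergy (G : SimpleGraph V) (ε : ℝ) (x : V → E) (i j : V) : ℝ :=
  min (‖x i - x j‖ ^ 2) (ε ^ 2) ⊔ (if G.Adj i j then 0 else ε ^ 2)

noncomputable def groupEnergy [Fintype V] (G : SimpleGraph V) (ε : ℝ) (x : V → E) : ℝ :=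
  ∑ i, ∑ j, pairEnergy G ε x i j

variable (G : SimpleGraph V) (ε : ℝ) (x : V → E)

theorem pairEnergy_le_sq (i j : V) : pairEnergy G ε x i j ≤ ε ^ 2 :=
  max_le (min_le_right _ _) (by split_ifs; exacts [sq_nonneg ε, le_rfl])

theorem pairEnergy_le_norm_sub_sq {i j : V} (h : G.Adj i j) :
    pairEnergy G ε x i j ≤ ‖x i - x j‖ ^ 2 := by
  rw [pairEnergy, if_pos h]
  exact max_le (min_le_left _ _) (by positivity)

theorem pairEnergy_of_not_adj (hε : 0 ≤ ε) {i j : V}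
    (h : ¬ (confidenceGraph G ε x).Adj i j) : pairEnergy G ε x i j = ε ^ 2 := by
  refine le_antisymm (pairEnergy_le_sq G ε x i j) ?_
  by_cases hG : G.Adj i j
  · have hfar : ε < ‖x i - x j‖ := lt_of_not_ge fun hle => h (confidenceGraph_adj.2 ⟨hG, hle⟩)
    rw [pairEnergy, min_eq_right (pow_le_pow_left₀ hε hfar.le 2)]
    exact le_max_left _ _
  · rw [pairEnergy, if_neg hG]
    exact le_max_right _ _

theorem pairEnergy_of_adj {i j : V} (h : (confidenceGraph G ε x).Adj i j) :
    pairEnergy G ε x i j = ‖x i - x j‖ ^ 2 := by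
  rw [confidenceGraph_adj] at h
  rw [pairEnergy, if_pos h.1, min_eq_left (pow_le_pow_left₀ (norm_nonneg _) h.2 2)]
  exact max_eq_left (by positivity)

theorem groupEnergy_nonneg [Fintype V] : 0 ≤ groupEnergy G ε x :=
  sum_nonneg fun _ _ => sum_nonneg fun _ _ => le_max_of_le_right (by split_ifs <;> positivity)

theorem sum_sum_confidence_neighbor_sub_le_groupEnergy_sub [Fintype V] (hε : 0 ≤ ε)
    (y : V → E) :
    ∑ i, ∑ j ∈ (confidenceGraph G ε x).neighborFinset i, (‖x i - x j‖ ^ 2 - ‖y i - y j‖ ^ 2) ≤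
      groupEnergy G ε x - groupEnergy G ε y := by
  rw [groupEnergy, groupEnergy, ← sum_sub_distrib]
  refine sum_le_sum fun i _ => ?_
  rw [← sum_sub_distrib, SimpleGraph.neighborFinset_eq_filter, sum_filter]
  refine sum_le_sum fun j _ => ?_
  split_ifs with h
  · rw [pairEnergy_of_adj G ε x h]
    linarith [pairEnergy_le_norm_sub_sq G ε y (confidenceGraph_adj.1 h).1]
  · rw [pairEnergy_of_not_adj G ε x hε h]
    linarith [pairEnergy_le_sq G ε y i j]

end Energy

theorem grpNbhd_eq_insert {n d : ℕ} (G : SimpleGraph (Fin n)) (ε : ℝ)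
    (x : ℕ → Fin n → EuclideanSpace ℝ (Fin d)) (t : ℕ) (i : Fin n) :
    grpNbhd G ε x t i = insert i ((confidenceGraph G ε (x t)).neighborFinset i) := by
  ext j
  simp [grpNbhd]

theorem four_mul_sum_norm_sub_succ_sq_le_groupEnergy_sub {n d : ℕ} (G : SimpleGraph (Fin n))
    {ε : ℝ} (hε : 0 ≤ ε) (x : ℕ → Fin n → EuclideanSpace ℝ (Fin d)) (α : ℕ → Fin n → ℝ)
    (hα : ∀ t i, α t i ∈ Set.Icc (0 : ℝ) 1)
    (hdyn : ∀ t i, x (t + 1) i =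
      α t i • x t i + ((1 - α t i) / ((grpNbhd G ε x t i).card : ℝ)) •
        ∑ k ∈ grpNbhd G ε x t i, x t k) (t : ℕ) :
    4 * ∑ i, ‖x t i - x (t + 1) i‖ ^ 2 ≤ groupEnergy G ε (x t) - groupEnergy G ε (x (t + 1)) := by
  set H := confidenceGraph G ε (x t)
  have hy : ∀ i, x (t + 1) i =
      x t i + ((1 - α t i) / (H.degree i + 1)) • ∑ j ∈ H.neighborFinset i, (x t j - x t i) :=
    fun i => by
      rw [hdyn, grpNbhd_eq_insert,
        smul_add_div_card_smul_sum_insert (H.notMem_neighborFinset_self i)]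
      rfl
  have hβ_nonneg : ∀ i, 0 ≤ (1 - α t i) / (H.degree i + 1) := fun i =>
    div_nonneg (sub_nonneg.2 (hα t i).2) (by positivity)
  have hβ_le : ∀ i, (1 - α t i) / (H.degree i + 1) * (H.degree i + 1) ≤ 1 := fun i => by
    rw [div_mul_cancel₀ _ (by positivity)]
    linarith [(hα t i).1]
  calc 4 * ∑ i, ‖x t i - x (t + 1) i‖ ^ 2 = 4 * ∑ i, ‖x (t + 1) i - x t i‖ ^ 2 := by
        simp_rw [norm_sub_rev]
    _ ≤ ∑ i, ∑ j ∈ H.neighborFinset i, (‖x t i - x t j‖ ^ 2 - ‖x (t + 1) i - x (t + 1) j‖ ^ 2) :=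
        H.four_mul_sum_norm_sq_le_of_averaging hβ_nonneg hβ_le hy
    _ ≤ groupEnergy G ε (x t) - groupEnergy G ε (x (t + 1)) :=
        sum_sum_confidence_neighbor_sub_le_groupEnergy_sub G ε (x t) hε (x (t + 1))

theorem group_interaction_increments_vanish_general (n d : ℕ)
    (ε : ℝ) (hε : 0 < ε)
    (G : SimpleGraph (Fin n))
    (x : ℕ → Fin n → EuclideanSpace ℝ (Fin d)) (α : ℕ → Fin n → ℝ)
    (hα : ∀ t i, α t i ∈ Set.Icc (0 : ℝ) 1)
    (hdyn : ∀ t i, x (t + 1) i =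
      α t i • x t i + ((1 - α t i) / ((grpNbhd G ε x t i).card : ℝ)) •
        ∑ k ∈ grpNbhd G ε x t i, x t k) :
    Summable (fun t : ℕ => ∑ i, ‖x t i - x (t + 1) i‖ ^ 2) ∧
    (∑' t : ℕ, ∑ i, ‖x t i - x (t + 1) i‖ ^ 2) ≤
      (∑ i, ∑ j, (min (‖x 0 i - x 0 j‖ ^ 2) (ε ^ 2)) ⊔
        (if G.Adj i j then 0 else ε ^ 2)) / 4 ∧
    (∀ i, Filter.Tendsto (fun t => x t i - x (t + 1) i) Filter.atTop (nhds 0)) := by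
  have hstep : ∀ t, ∑ i, ‖x t i - x (t + 1) i‖ ^ 2 ≤
      groupEnergy G ε (x t) / 4 - groupEnergy G ε (x (t + 1)) / 4 := fun t => by
    linarith [four_mul_sum_norm_sub_succ_sq_le_groupEnergy_sub G hε.le x α hα hdyn t]
  obtain ⟨hsum, htsum⟩ := summable_and_tsum_le_of_le_sub (fun t => by positivity)
    (fun t => div_nonneg (groupEnergy_nonneg G ε (x t)) zero_le_four) hstep
  refine ⟨hsum, htsum, fun i => tendsto_zero_of_summable_norm_sq ?_⟩
  exact hsum.of_nonneg_of_le (fun t => by positivity) fun t =>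
    single_le_sum (f := fun j => ‖x t j - x (t + 1) j‖ ^ 2) (fun j _ => by positivity) (mem_univ i)

/-- **Square-summability and vanishing increments for group interaction
(`n` individuals).** In the finite group-interaction model on a graph `E` over `[n]`,
with `Z_g(0) = Σ_{i,j} ((‖x_i(0) − x_j(0)‖² ∧ ε²) ∨ ε²·1{(i,j) ∉ E})`, one has
`Σ_{t=0}^∞ Σ_i ‖x_i(t) − x_i(t+1)‖² ≤ Z_g(0)/4`; in particular
`x_i(t) − x_i(t+1) → 0` as `t → ∞` for every `i`. -/
theorem group_interaction_increments_vanish (n d : ℕ) (hn : 1 ≤ n) (hd : 1 ≤ d)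
    (ε : ℝ) (hε : 0 < ε)
    (G : SimpleGraph (Fin n))
    (x : ℕ → Fin n → EuclideanSpace ℝ (Fin d)) (α : ℕ → Fin n → ℝ)
    (hα : ∀ t i, α t i ∈ Set.Icc (0 : ℝ) 1)
    (hdyn : ∀ t i, x (t + 1) i =
      α t i • x t i + ((1 - α t i) / ((grpNbhd G ε x t i).card : ℝ)) •
        ∑ k ∈ grpNbhd G ε x t i, x t k) :
    Summable (fun t : ℕ => ∑ i, ‖x t i - x (t + 1) i‖ ^ 2) ∧
    (∑' t : ℕ, ∑ i, ‖x t i - x (t + 1) i‖ ^ 2) ≤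
      (∑ i, ∑ j, (min (‖x 0 i - x 0 j‖ ^ 2) (ε ^ 2)) ⊔
        (if G.Adj i j then 0 else ε ^ 2)) / 4 ∧
    (∀ i, Filter.Tendsto (fun t => x t i - x (t + 1) i) Filter.atTop (nhds 0)) :=
  group_interaction_increments_vanish_general n d ε hε G x α hα hdyn
end
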